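/- arXiv:math/0407489 — 5 statements merged into one kernel-verified Lean document; each statement's English description precedes it below -/
import Mathlib

section
/- Let S be a sum ring and let M, N be right S-modules. Then the S-module (M × N) ⊗_{f_⊕} S (i.e., M × N viewed as an S×S-module, base-changed along the ring homomorphism f_⊕ : S × S → S) is isomorphic to the direct sum M ⊕ N with its usual S-module structure, via the map sending m ⊕ n to (m,n) ⊗ (ū + v̄), with inverse sending (m,n) ⊗ r to m·u·r ⊕ n·v·r. -/
open MulOpposite

/-- Let `S` be a sum ring and `M`, `N` right `S`-modules (modelled as modules over `Sᵐᵒᵖ`).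
If `P` is a right `S`-module realizing the base change `(M × N) ⊗_{f_⊕} S` of the
`(S × S)`-module `M × N` along the ring homomorphism `f_⊕ : S × S → S`,
`f_⊕(r,s) = ū·r·u + v̄·s·v` (i.e. `P` comes with a balanced map `τ : M × N → P`,
`x ↦ x ⊗ 1`, satisfying the universal property of extension of scalars), then `P` is
isomorphic as a right `S`-module to `M ⊕ N`, via the map sending `m ⊕ n` to
`(m,n) ⊗ (ū + v̄)`, with inverse sending `(m,n) ⊗ r` to `m·u·r ⊕ n·v·r`. -/
theorem sumRing_baseChange_prod_iso (S : Type) [Ring S] (u ubar v vbar : S)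
    (h1 : u * ubar = 1) (h2 : v * vbar = 1) (h3 : vbar * v + ubar * u = 1)
    (M N P : Type) [AddCommGroup M] [Module Sᵐᵒᵖ M] [AddCommGroup N] [Module Sᵐᵒᵖ N]
    [AddCommGroup P] [Module Sᵐᵒᵖ P]
    (τ : M × N →+ P)
    (hbal : ∀ (m : M) (n : N) (r s : S),
      τ (op r • m, op s • n) = op (ubar * r * u + vbar * s * v) • τ (m, n))
    (huniv : ∀ (Q : Type) [AddCommGroup Q] [Module Sᵐᵒᵖ Q] (b : M × N →+ Q),
      (∀ (m : M) (n : N) (r s : S),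
          b (op r • m, op s • n) = op (ubar * r * u + vbar * s * v) • b (m, n)) →
      ∃! h : P →ₗ[Sᵐᵒᵖ] Q, ∀ x : M × N, h (τ x) = b x) :
    ∃ e : (M × N) ≃ₗ[Sᵐᵒᵖ] P,
      (∀ (m : M) (n : N), e (m, n) = op (ubar + vbar) • τ (m, n)) ∧
      (∀ (m : M) (n : N) (r : S),
        e.symm (op r • τ (m, n)) = (op (u * r) • m, op (v * r) • n)) := by
  -- Derived ring identities
  have h5 : u * vbar * v = 0 := by
    have h4 : u * (vbar * v + ubar * u) = u * 1 := by rw [h3]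
    rw [mul_add, mul_one, ← mul_assoc, ← mul_assoc u ubar u, h1, one_mul] at h4
    rwa [add_eq_right] at h4
  have huv : u * vbar = 0 := by
    have : u * vbar * (v * vbar) = 0 := by rw [← mul_assoc, h5, zero_mul]
    rwa [h2, mul_one] at this
  have h6 : v * ubar * u = 0 := by
    have h4 : v * (vbar * v + ubar * u) = v * 1 := by rw [h3]
    rw [mul_add, mul_one, ← mul_assoc v ubar u, ← mul_assoc v vbar v, h2, one_mul] at h4
    rwa [add_eq_left] at h4
  have hvu : v * ubar = 0 := by
    have : v * ubar * (u * ubar) = 0 := by rw [← mul_assoc, h6, zero_mul]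
    rwa [h1, mul_one] at this
  have keyu : ∀ r s : S, u * (ubar * r * u + vbar * s * v) = r * u := by
    intro r s; simp [mul_add, ← mul_assoc, h1, huv]
  have keyv : ∀ r s : S, v * (ubar * r * u + vbar * s * v) = s * v := by
    intro r s; simp [mul_add, ← mul_assoc, h2, hvu]
  have key2 : ∀ r s : S, (ubar * r * u + vbar * s * v) * (ubar + vbar)
      = ubar * r + vbar * s := by
    intro r s
    have e1 : ubar * r * u * ubar = ubar * r := by
      rw [mul_assoc (ubar * r), h1, mul_one]
    have e2 : ubar * r * u * vbar = 0 := by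
      rw [mul_assoc (ubar * r), huv, mul_zero]
    have e3 : vbar * s * v * ubar = 0 := by
      rw [mul_assoc (vbar * s), hvu, mul_zero]
    have e4 : vbar * s * v * vbar = vbar * s := by
      rw [mul_assoc (vbar * s), h2, mul_one]
    rw [add_mul, mul_add, mul_add, e1, e2, e3, e4, add_zero, zero_add]
  -- the backward balanced map
  have bmapadd : ∀ x y : M × N,
      ((op u • (x + y).1 : M), (op v • (x + y).2 : N))
        = (op u • x.1 + op u • y.1, op v • x.2 + op v • y.2) := by
    intro x y; simp [smul_add]
  let b : M × N →+ M × N :=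
    { toFun := fun x => (op u • x.1, op v • x.2)
      map_zero' := by simp
      map_add' := fun x y => by simp [smul_add, Prod.add_def] }
  have bbal : ∀ (m : M) (n : N) (r s : S),
      b (op r • m, op s • n) = op (ubar * r * u + vbar * s * v) • b (m, n) := by
    intro m n r s
    show (op u • op r • m, op v • op s • n)
        = op (ubar * r * u + vbar * s * v) • (op u • m, op v • n)
    rw [Prod.smul_mk]
    refine Prod.ext ?_ ?_ <;> simp only [smul_smul, ← op_mul]
    · rw [keyu r s]
    · rw [keyv r s]
  obtain ⟨h, hh, huniq⟩ := huniv (M × N) b bbal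
  -- the forward map
  let e' : M × N →ₗ[Sᵐᵒᵖ] P :=
    { toFun := fun x => op (ubar + vbar) • τ x
      map_add' := fun x y => by simp only [map_add, smul_add]
      map_smul' := fun c x => by
        obtain ⟨m, n⟩ := x
        rw [← op_unop c]
        set r := unop c with hr
        show op (ubar + vbar) • τ (op r • (m, n)) = op r • (op (ubar + vbar) • τ (m, n))
        rw [Prod.smul_mk, hbal, smul_smul, smul_smul, ← op_mul, ← op_mul, key2,
          add_mul] }
  have lefti : ∀ (m : M) (n : N), h (e' (m, n)) = (m, n) := by
    intro m n
    show h (op (ubar + vbar) • τ (m, n)) = (m, n)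
    rw [map_smul, hh (m, n)]
    show op (ubar + vbar) • ((op u • m, op v • n) : M × N) = (m, n)
    rw [Prod.smul_mk]
    refine Prod.ext ?_ ?_ <;> simp only [smul_smul, ← op_mul, mul_add, h1, h2, huv, hvu,
      add_zero, zero_add, op_one, one_smul]
  have righti : e'.comp h = LinearMap.id := by
    have hcomp : ∀ x : M × N, (e'.comp h) (τ x) = τ x := by
      rintro ⟨m, n⟩
      show op (ubar + vbar) • τ (h (τ (m, n))) = τ (m, n)
      rw [hh (m, n)]
      show op (ubar + vbar) • τ (op u • m, op v • n) = τ (m, n)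
      rw [hbal, smul_smul, ← op_mul, key2]
      rw [show ubar * u + vbar * v = 1 from by rw [add_comm]; exact h3, op_one, one_smul]
    have hτid : ∀ x : M × N, (LinearMap.id : P →ₗ[Sᵐᵒᵖ] P) (τ x) = τ x := fun x => rfl
    -- both e'.comp h and id are the unique map lifting τ itself
    obtain ⟨g, hg, hguniq⟩ := huniv P τ hbal
    rw [hguniq (e'.comp h) hcomp, hguniq LinearMap.id hτid]
  refine ⟨LinearEquiv.ofLinear e' h righti (by
    apply LinearMap.ext
    rintro ⟨m, n⟩
    exact lefti m n), fun m n => rfl, ?_⟩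
  intro m n r
  show h (op r • τ (m, n)) = (op (u * r) • m, op (v * r) • n)
  rw [map_smul, hh (m, n)]
  show op r • ((op u • m, op v • n) : M × N) = (op (u * r) • m, op (v * r) • n)
  rw [Prod.smul_mk]
  refine Prod.ext ?_ ?_ <;> simp [smul_smul, ← op_mul]
end

section
/- In an infinite sum ring S, for every finitely generated projective S-module M there is an isomorphism of S-modules M ⊗_{f_∞} S ≅ M ⊕ (M ⊗_{f_∞} S). In particular, the class of M ⊗_{f_∞} S gives an Eilenberg swindle: [M ⊗_{f_∞} S] = [M] + [M ⊗_{f_∞} S] in K_0(S), so K_0(S) = 0. -/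
/-!
Right multiplication by `u, v, ū, v̄` intertwines `f_∞` with itself or with the identity:
reading `f_⊕(r, f_∞ r) = f_∞ r` after multiplying by one of them gives
`u·f_∞(r) = r·u`, `v·f_∞(r) = f_∞(r)·v`, `f_∞(r)·ū = ū·r` and `f_∞(r)·v̄ = v̄·f_∞(r)`.
Hence `m ⊗ 1 ↦ (m·u, (m ⊗ 1)·v)` and `(m, m' ⊗ 1) ↦ (m ⊗ 1)·ū + (m' ⊗ 1)·v̄` are well defined,
and they are mutually inverse because `ū·u + v̄·v = 1`, `u·ū = v·v̄ = 1` and `u·v̄ = v·ū = 0`.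
Finite generation and projectivity pass to the base change, since a retraction of a free
module `Sⁿ` onto `M` base-changes to a retraction of `Sⁿ` onto `M ⊗_{f_∞} S`.
-/

open MulOpposite

universe u

structure IsSumRing {S : Type*} [Ring S] (u ubar v vbar : S) : Prop where
  u_mul_ubar : u * ubar = 1
  v_mul_vbar : v * vbar = 1
  vbar_mul_v_add_ubar_mul_u : vbar * v + ubar * u = 1

structure IsInfiniteSumRing {S : Type*} [Ring S] (u ubar v vbar : S) (finf : S →+* S) : Prop
    extends IsSumRing u ubar v vbar where
  sum_map_eq_map : ∀ r, ubar * r * u + vbar * finf r * v = finf r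

namespace IsSumRing

variable {S : Type*} [Ring S] {u ubar v vbar : S} (hS : IsSumRing u ubar v vbar)
include hS

theorem u_mul_vbar : u * vbar = 0 := by
  have h : u * vbar * v = 0 := by
    have := congrArg (u * ·) hS.vbar_mul_v_add_ubar_mul_u
    simpa only [mul_add, mul_one, ← mul_assoc, hS.u_mul_ubar, one_mul, add_eq_right] using this
  calc u * vbar = u * vbar * v * vbar := by rw [mul_assoc _ v, hS.v_mul_vbar, mul_one]
    _ = 0 := by rw [h, zero_mul]

theorem v_mul_ubar : v * ubar = 0 := by
  have h : v * ubar * u = 0 := by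
    have := congrArg (v * ·) hS.vbar_mul_v_add_ubar_mul_u
    simpa only [mul_add, mul_one, ← mul_assoc, hS.v_mul_vbar, one_mul, add_eq_left] using this
  calc v * ubar = v * ubar * u * ubar := by rw [mul_assoc _ u, hS.u_mul_ubar, mul_one]
    _ = 0 := by rw [h, zero_mul]

end IsSumRing

namespace IsInfiniteSumRing

variable {S : Type*} [Ring S] {u ubar v vbar : S} {finf : S →+* S}
  (hS : IsInfiniteSumRing u ubar v vbar finf) (r : S)
include hS

theorem map_mul_ubar : finf r * ubar = ubar * r := by
  have := congrArg (· * ubar) (hS.sum_map_eq_map r)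
  simpa only [add_mul, mul_assoc, hS.u_mul_ubar, hS.v_mul_ubar, mul_one, mul_zero, add_zero]
    using this.symm

theorem map_mul_vbar : finf r * vbar = vbar * finf r := by
  have := congrArg (· * vbar) (hS.sum_map_eq_map r)
  simpa only [add_mul, mul_assoc, hS.v_mul_vbar, hS.u_mul_vbar, mul_one, mul_zero, zero_add]
    using this.symm

theorem u_mul_map : u * finf r = r * u := by
  have := congrArg (u * ·) (hS.sum_map_eq_map r)
  simpa only [mul_add, ← mul_assoc, hS.u_mul_ubar, hS.u_mul_vbar, one_mul, zero_mul, add_zero]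
    using this.symm

theorem v_mul_map : v * finf r = finf r * v := by
  have := congrArg (v * ·) (hS.sum_map_eq_map r)
  simpa only [mul_add, ← mul_assoc, hS.v_mul_vbar, hS.v_mul_ubar, one_mul, zero_mul, zero_add]
    using this.symm

theorem op_u_mul (c : Sᵐᵒᵖ) : op u * c = RingHom.op finf c * op u :=
  unop_injective (hS.u_mul_map c.unop).symm

theorem op_v_mul_map (c : Sᵐᵒᵖ) : op v * RingHom.op finf c = RingHom.op finf c * op v :=
  unop_injective (hS.v_mul_map c.unop).symm

theorem op_ubar_mul_map (c : Sᵐᵒᵖ) : op ubar * RingHom.op finf c = c * op ubar :=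
  unop_injective (hS.map_mul_ubar c.unop)

theorem op_vbar_mul_map (c : Sᵐᵒᵖ) : op vbar * RingHom.op finf c = RingHom.op finf c * op vbar :=
  unop_injective (hS.map_mul_vbar c.unop)

end IsInfiniteSumRing

namespace LinearMap

variable {A B M N : Type*} [Semiring A] [Semiring B] [AddCommMonoid M] [AddCommMonoid N]
  [Module B M] [Module A N] {σ σ' : B →+* A}

def smulOfIntertwining (a : A) (ha : ∀ b, a * σ b = σ' b * a) (g : M →ₛₗ[σ] N) :
    M →ₛₗ[σ'] N where
  toFun m := a • g m
  map_add' x y := by rw [map_add, smul_add]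
  map_smul' b m := by rw [map_smulₛₗ, smul_smul, ha, mul_smul]

@[simp]
theorem smulOfIntertwining_apply (a : A) (ha : ∀ b, a * σ b = σ' b * a) (g : M →ₛₗ[σ] N)
    (m : M) : smulOfIntertwining a ha g m = a • g m :=
  rfl

end LinearMap

section BaseChange

variable {R : Type*} {S M P : Type u} [Ring R] [Ring S] [AddCommMonoid M] [Module Rᵐᵒᵖ M]
  [AddCommGroup P] [Module Sᵐᵒᵖ P]

/-- `τ` realizes `P = M ⊗_f S` with `τ m = m ⊗ 1`; right modules are modules over the opposite
ring, so `f`-balanced maps out of `M` are the `RingHom.op f`-semilinear ones. -/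
def IsBaseChangeAlong (f : R →+* S) (τ : M →ₛₗ[RingHom.op f] P) : Prop :=
  ∀ (Q : Type u) [AddCommGroup Q] [Module Sᵐᵒᵖ Q] (b : M →ₛₗ[RingHom.op f] Q),
    ∃! h : P →ₗ[Sᵐᵒᵖ] Q, h.comp τ = b

def piMapOp (f : R →+* S) (ι : Type*) : (ι → Rᵐᵒᵖ) →ₛₗ[RingHom.op f] ι → Sᵐᵒᵖ where
  toFun x i := RingHom.op f (x i)
  map_add' _ _ := funext fun _ => map_add _ _ _
  map_smul' _ _ := funext fun _ => map_mul _ _ _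

theorem linearCombination_comp_piMapOp {N : Type*} [AddCommMonoid N] [Module Sᵐᵒᵖ N]
    (f : R →+* S) {ι : Type*} [Fintype ι] [DecidableEq ι]
    (g : (ι → Rᵐᵒᵖ) →ₛₗ[RingHom.op f] N) :
    (Fintype.linearCombination Sᵐᵒᵖ fun i => g (Pi.single i 1)).comp (piMapOp f ι) = g := by
  ext x
  have hx : ∑ i, x i • Pi.single i (1 : Rᵐᵒᵖ) = x := by
    simp_rw [← Pi.single_smul, smul_eq_mul, mul_one]
    exact Finset.univ_sum_single x
  conv_rhs => rw [← hx]
  simp [Fintype.linearCombination_apply, piMapOp, map_sum, map_smulₛₗ]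

namespace IsBaseChangeAlong

variable {f : R →+* S} {τ : M →ₛₗ[RingHom.op f] P} (H : IsBaseChangeAlong f τ)
  {Q : Type u} [AddCommGroup Q] [Module Sᵐᵒᵖ Q]

noncomputable def lift (b : M →ₛₗ[RingHom.op f] Q) : P →ₗ[Sᵐᵒᵖ] Q :=
  (H Q b).exists.choose

theorem lift_comp (b : M →ₛₗ[RingHom.op f] Q) : (H.lift b).comp τ = b :=
  (H Q b).exists.choose_spec

@[simp]
theorem lift_apply (b : M →ₛₗ[RingHom.op f] Q) (m : M) : H.lift b (τ m) = b m :=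
  LinearMap.congr_fun (H.lift_comp b) m

include H in
theorem hom_ext {g h : P →ₗ[Sᵐᵒᵖ] Q} (hgh : g.comp τ = h.comp τ) : g = h :=
  (H Q (h.comp τ)).unique hgh rfl

section FiniteProjective

variable [Module.Finite Rᵐᵒᵖ M] [Module.Projective Rᵐᵒᵖ M]
include H

theorem exists_comp_eq_id_of_finite_projective :
    ∃ (n : ℕ) (σ : P →ₗ[Sᵐᵒᵖ] Fin n → Sᵐᵒᵖ) (ρ : (Fin n → Sᵐᵒᵖ) →ₗ[Sᵐᵒᵖ] P),
      ρ ∘ₗ σ = LinearMap.id := by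
  obtain ⟨n, π, hπ⟩ := Module.Finite.exists_fin' Rᵐᵒᵖ M
  obtain ⟨s, hs⟩ := Module.projective_lifting_property π LinearMap.id hπ
  let ρ := Fintype.linearCombination Sᵐᵒᵖ fun i => τ (π (Pi.single i 1))
  have hρ : ρ.comp (piMapOp f (Fin n)) = τ.comp π := linearCombination_comp_piMapOp f (τ.comp π)
  refine ⟨n, H.lift ((piMapOp f (Fin n)).comp s), ρ, ?_⟩
  apply H.hom_ext
  calc (ρ ∘ₗ H.lift ((piMapOp f (Fin n)).comp s)).comp τ
      = (ρ.comp (piMapOp f (Fin n))).comp s := by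
        rw [LinearMap.comp_assoc, H.lift_comp, LinearMap.comp_assoc]
    _ = τ.comp (π ∘ₗ s) := by
        rw [hρ, LinearMap.comp_assoc]
    _ = LinearMap.id.comp τ := by rw [hs, LinearMap.comp_id, LinearMap.id_comp]

theorem finite : Module.Finite Sᵐᵒᵖ P := by
  obtain ⟨n, σ, ρ, h⟩ := H.exists_comp_eq_id_of_finite_projective
  exact Module.Finite.of_surjective ρ fun p => ⟨σ p, LinearMap.congr_fun h p⟩

theorem projective : Module.Projective Sᵐᵒᵖ P := by
  obtain ⟨n, σ, ρ, h⟩ := H.exists_comp_eq_id_of_finite_projective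
  exact Module.Projective.of_split σ ρ h

end FiniteProjective

end IsBaseChangeAlong

end BaseChange

namespace IsBaseChangeAlong

variable {S M P : Type u} [Ring S] [AddCommGroup M] [Module Sᵐᵒᵖ M] [AddCommGroup P]
  [Module Sᵐᵒᵖ P] {u ubar v vbar : S} {finf : S →+* S} (hS : IsInfiniteSumRing u ubar v vbar finf)
  {τ : M →ₛₗ[RingHom.op finf] P} (H : IsBaseChangeAlong finf τ)

noncomputable def toProd : P →ₗ[Sᵐᵒᵖ] M × P :=
  H.lift <|
    (LinearMap.inl Sᵐᵒᵖ M P).comp (LinearMap.smulOfIntertwining (op u) hS.op_u_mul .id) +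
      (LinearMap.inr Sᵐᵒᵖ M P).comp (LinearMap.smulOfIntertwining (op v) hS.op_v_mul_map τ)

noncomputable def ofProd : M × P →ₗ[Sᵐᵒᵖ] P :=
  (LinearMap.smulOfIntertwining (op ubar) hS.op_ubar_mul_map τ).coprod
    (H.lift (LinearMap.smulOfIntertwining (op vbar) hS.op_vbar_mul_map τ))

theorem ofProd_comp_toProd : (H.ofProd hS).comp (H.toProd hS) = LinearMap.id := by
  refine H.hom_ext (LinearMap.ext fun m => ?_)
  simp [toProd, ofProd, smul_smul, ← add_smul, ← op_mul, ← op_add, add_comm (ubar * u),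
    hS.vbar_mul_v_add_ubar_mul_u]

theorem toProd_comp_ofProd : (H.toProd hS).comp (H.ofProd hS) = LinearMap.id := by
  refine LinearMap.prod_ext (LinearMap.ext fun m => ?_) (H.hom_ext (LinearMap.ext fun m => ?_))
  · simp [toProd, ofProd, smul_smul, ← op_mul, hS.u_mul_ubar, hS.v_mul_ubar]
  · simp [toProd, ofProd, smul_smul, ← op_mul, hS.u_mul_vbar, hS.v_mul_vbar]

noncomputable def prodEquiv : (M × P) ≃ₗ[Sᵐᵒᵖ] P :=
  LinearEquiv.ofLinearMap (H.ofProd hS) (H.toProd hS) (H.ofProd_comp_toProd hS)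
    (H.toProd_comp_ofProd hS)

end IsBaseChangeAlong

/-- Let `S` be an infinite sum ring: a sum ring (elements `u, ū, v, v̄` with `u·ū = 1`,
`v·v̄ = 1`, `v̄·v + ū·u = 1`, giving the ring homomorphism `f_⊕(r,s) = ū·r·u + v̄·s·v`)
together with a ring endomorphism `f_∞ : S → S` satisfying `f_⊕(r, f_∞(r)) = f_∞(r)`.
Let `M` be a finitely generated projective right `S`-module (modelled over `Sᵐᵒᵖ`) and let
`P` realize the base change `M ⊗_{f_∞} S` (via a balanced map `τ : M → P`, `m ↦ m ⊗ 1`,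
with the universal property of extension of scalars along `f_∞`). Then there is an
isomorphism of right `S`-modules `M ⊗_{f_∞} S ≅ M ⊕ (M ⊗_{f_∞} S)`, and `M ⊗_{f_∞} S`
is again finitely generated projective; this is the Eilenberg swindle showing
`[M] = 0` in `K₀(S)`, so `K₀(S) = 0`. -/
theorem infiniteSumRing_eilenberg_swindle (S : Type) [Ring S] (u ubar v vbar : S)
    (h1 : u * ubar = 1) (h2 : v * vbar = 1) (h3 : vbar * v + ubar * u = 1)
    (finf : S →+* S)
    (hinf : ∀ r : S, ubar * r * u + vbar * finf r * v = finf r)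
    (M : Type) [AddCommGroup M] [Module Sᵐᵒᵖ M]
    [Module.Finite Sᵐᵒᵖ M] [Module.Projective Sᵐᵒᵖ M]
    (P : Type) [AddCommGroup P] [Module Sᵐᵒᵖ P]
    (τ : M →+ P)
    (hbal : ∀ (m : M) (r : S), τ (op r • m) = op (finf r) • τ m)
    (huniv : ∀ (Q : Type) [AddCommGroup Q] [Module Sᵐᵒᵖ Q] (b : M →+ Q),
      (∀ (m : M) (r : S), b (op r • m) = op (finf r) • b m) →
      ∃! h : P →ₗ[Sᵐᵒᵖ] Q, ∀ m : M, h (τ m) = b m) :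
    Nonempty ((M × P) ≃ₗ[Sᵐᵒᵖ] P) ∧ Module.Finite Sᵐᵒᵖ P ∧ Module.Projective Sᵐᵒᵖ P := by
  have hS : IsInfiniteSumRing u ubar v vbar finf := ⟨⟨h1, h2, h3⟩, hinf⟩
  let τ' : M →ₛₗ[RingHom.op finf] P := { τ with map_smul' := fun c m => hbal m c.unop }
  have H : IsBaseChangeAlong finf τ' := by
    intro Q _ _ b
    have hb : ∀ (m : M) (r : S), b (op r • m) = op (finf r) • b m := fun m r =>
      b.map_smulₛₗ (op r) m
    refine (existsUnique_congr fun h : P →ₗ[Sᵐᵒᵖ] Q => ?_).mp (huniv Q b.toAddMonoidHom hb)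
    rw [LinearMap.ext_iff]
    rfl
  exact ⟨⟨H.prodEquiv hS⟩, H.finite, H.projective⟩
end

section
/- Every regular coherent group is torsionfree. More precisely: if G is a group such that the integral group ring ℤG is regular coherent (every finitely presented ℤG-module admits a finite-length resolution by finitely generated projective ℤG-modules), then G has no nontrivial finite subgroups. -/
/-- `HasFinFGProjRes R n M` says that the `R`-module `M` admits a resolution
`0 → P_n → ⋯ → P_0 → M → 0` of length `n` by finitely generated projective `R`-modules
(each `P_i` realized, up to isomorphism, as a submodule of some `R^k`). -/
def HasFinFGProjRes (R : Type) [Ring R] : ℕ → (M : Type) → [AddCommGroup M] → [Module R M] → Prop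
  | 0, M, _, _ => Module.Finite R M ∧ Module.Projective R M
  | n + 1, M, _, _ =>
      ∃ (k : ℕ) (P : Submodule R (Fin k → R)),
        Module.Finite R P ∧ Module.Projective R P ∧
        ∃ f : P →ₗ[R] M, Function.Surjective f ∧
          HasFinFGProjRes R n (LinearMap.ker f)


set_option maxHeartbeats 1000000

/-- Unbounded-rank projective resolution of length `n`. -/
def HasProjRes (k : Type) [Ring k] : ℕ → (M : Type) → [AddCommGroup M] → [Module k M] → Prop
  | 0, M, _, _ => Module.Projective k M
  | n + 1, M, _, _ =>
      ∃ (P : Type) (_ : AddCommGroup P) (_ : Module k P), Module.Projective k P ∧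
        ∃ f : P →ₗ[k] M, Function.Surjective f ∧ HasProjRes k n (LinearMap.ker f)

section Generic

variable {k : Type} [Ring k]

/-- Transport along a linear equivalence. -/
theorem HasProjRes.congr : ∀ (n : ℕ) {M M' : Type} [AddCommGroup M] [Module k M]
    [AddCommGroup M'] [Module k M'] (_ : HasProjRes k n M) (_ : M ≃ₗ[k] M'),
    HasProjRes k n M'
  | 0, M, M', _, _, _, _, h, e => by
      haveI : Module.Projective k M := h
      exact Module.Projective.of_split e.symm.toLinearMap e.toLinearMap (by ext x; simp)
  | n + 1, M, M', _, _, _, _, h, e => by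
      obtain ⟨P, _, _, hP, f, hf, hker⟩ := h
      refine ⟨P, _, _, hP, e.toLinearMap.comp f, e.surjective.comp hf, ?_⟩
      have hk : LinearMap.ker (e.toLinearMap.comp f) = LinearMap.ker f := by
        rw [LinearMap.ker_comp, LinearEquiv.ker, Submodule.comap_bot]
      rw [hk]; exact hker

/-- If `f : A → B` is a surjective linear map with a section `s`, then `A ≃ B × ker f`. -/
noncomputable def splitEquiv {A B : Type} [AddCommGroup A] [Module k A]
    [AddCommGroup B] [Module k B] (f : A →ₗ[k] B) (s : B →ₗ[k] A)
    (hs : f.comp s = LinearMap.id) : A ≃ₗ[k] B × LinearMap.ker f := by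
  have hsp : ∀ b, f (s b) = b := fun b => congrArg (fun g => g b) (congrArg DFunLike.coe hs)
  refine LinearEquiv.ofLinear
    (LinearMap.prod f ((LinearMap.id - s.comp f).codRestrict _ (fun a => by
      simp [LinearMap.mem_ker, hsp])))
    ((s.comp (LinearMap.fst k B (LinearMap.ker f))) +
      ((LinearMap.ker f).subtype.comp (LinearMap.snd k B (LinearMap.ker f)))) ?_ ?_
  · apply LinearMap.ext; intro p
    obtain ⟨b, x⟩ := p
    have hx : f x.1 = 0 := x.2
    apply Prod.ext
    · simp [hsp, hx]
    · apply Subtype.ext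
      simp [hsp, hx]
  · apply LinearMap.ext; intro a
    simp

/-- Kernel of a product map. -/
noncomputable def kerProdEquiv {A B C D : Type} [AddCommGroup A] [Module k A]
    [AddCommGroup B] [Module k B] [AddCommGroup C] [Module k C] [AddCommGroup D] [Module k D]
    (u : A →ₗ[k] C) (v : B →ₗ[k] D) :
    LinearMap.ker (u.prodMap v) ≃ₗ[k] LinearMap.ker u × LinearMap.ker v := by
  have mem1 : ∀ x : LinearMap.ker (u.prodMap v), u x.1.1 = 0 := fun x =>
    congrArg Prod.fst (x.2 : (u x.1.1, v x.1.2) = (0,0))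
  have mem2 : ∀ x : LinearMap.ker (u.prodMap v), v x.1.2 = 0 := fun x =>
    congrArg Prod.snd (x.2 : (u x.1.1, v x.1.2) = (0,0))
  refine LinearEquiv.ofLinear
    (LinearMap.prod
      (((LinearMap.fst k A B).comp (LinearMap.ker (u.prodMap v)).subtype).codRestrict _
        (fun x => mem1 x))
      (((LinearMap.snd k A B).comp (LinearMap.ker (u.prodMap v)).subtype).codRestrict _
        (fun x => mem2 x)))
    ((((LinearMap.ker u).subtype.comp (LinearMap.fst k _ _)).prod
      ((LinearMap.ker v).subtype.comp (LinearMap.snd k _ _))).codRestrict _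
        (fun p => by
          have h1 : u p.1.1 = 0 := p.1.2
          have h2 : v p.2.1 = 0 := p.2.2
          simp [LinearMap.mem_ker, Prod.ext_iff, h1, h2])) ?_ ?_
  · apply LinearMap.ext; intro p
    apply Prod.ext <;> · apply Subtype.ext; rfl
  · apply LinearMap.ext; intro x
    apply Subtype.ext; apply Prod.ext <;> rfl

/-- Schanuel's lemma. -/
theorem schanuel {P P' M : Type} [AddCommGroup P] [Module k P] [AddCommGroup P'] [Module k P']
    [AddCommGroup M] [Module k M] [Module.Projective k P] [Module.Projective k P']
    (f : P →ₗ[k] M) (f' : P' →ₗ[k] M) (hf : Function.Surjective f)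
    (hf' : Function.Surjective f') :
    Nonempty ((LinearMap.ker f × P') ≃ₗ[k] (LinearMap.ker f' × P)) := by
  set d : P × P' →ₗ[k] M := f.comp (LinearMap.fst k P P') - f'.comp (LinearMap.snd k P P') with hd
  have memd : ∀ {p : P} {p' : P'}, f p = f' p' → (p, p') ∈ LinearMap.ker d := by
    intro p p' h; simp [hd, LinearMap.mem_ker, h]
  have memd' : ∀ x : LinearMap.ker d, f x.1.1 = f' x.1.2 := by
    intro x
    have := x.2
    simp only [hd, LinearMap.mem_ker, LinearMap.sub_apply, LinearMap.comp_apply,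
      LinearMap.fst_apply, LinearMap.snd_apply, sub_eq_zero] at this
    exact this
  set X := LinearMap.ker d with hX
  let π₁ : X →ₗ[k] P := (LinearMap.fst k P P').comp X.subtype
  let π₂ : X →ₗ[k] P' := (LinearMap.snd k P P').comp X.subtype
  have hπ₁ : Function.Surjective π₁ := by
    intro p
    obtain ⟨p', hp'⟩ := hf' (f p)
    exact ⟨⟨(p, p'), memd hp'.symm⟩, rfl⟩
  have hπ₂ : Function.Surjective π₂ := by
    intro p'
    obtain ⟨p, hp⟩ := hf (f' p')
    exact ⟨⟨(p, p'), memd hp⟩, rfl⟩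
  have k₁ : LinearMap.ker π₁ ≃ₗ[k] LinearMap.ker f' := by
    have m1 : ∀ x : LinearMap.ker π₁, f' x.1.1.2 = 0 := by
      intro x
      have h0 : x.1.1.1 = 0 := x.2
      have := memd' x.1
      rw [h0, map_zero] at this
      exact this.symm
    have m2 : ∀ y : LinearMap.ker f', ((0 : P), y.1) ∈ X := by
      intro y
      exact memd (by rw [map_zero, y.2])
    refine LinearEquiv.ofLinear
      ((π₂.comp (LinearMap.ker π₁).subtype).codRestrict _ (fun x => m1 x))
      (LinearMap.codRestrict (LinearMap.ker π₁)
        (LinearMap.codRestrict X ((LinearMap.inr k P P').comp (LinearMap.ker f').subtype)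
          (fun y => m2 y)) (fun y => rfl)) ?_ ?_
    · apply LinearMap.ext; intro y; apply Subtype.ext; rfl
    · apply LinearMap.ext; intro x
      apply Subtype.ext; apply Subtype.ext
      apply Prod.ext
      · exact (x.2 : π₁ x = 0).symm
      · rfl
  have k₂ : LinearMap.ker π₂ ≃ₗ[k] LinearMap.ker f := by
    have m1 : ∀ x : LinearMap.ker π₂, f x.1.1.1 = 0 := by
      intro x
      have h0 : x.1.1.2 = 0 := x.2
      have := memd' x.1
      rw [h0, map_zero] at this
      exact this
    have m2 : ∀ y : LinearMap.ker f, ((y.1 : P), (0 : P')) ∈ X := by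
      intro y
      exact memd (by rw [map_zero, y.2])
    refine LinearEquiv.ofLinear
      ((π₁.comp (LinearMap.ker π₂).subtype).codRestrict _ (fun x => m1 x))
      (LinearMap.codRestrict (LinearMap.ker π₂)
        (LinearMap.codRestrict X ((LinearMap.inl k P P').comp (LinearMap.ker f).subtype)
          (fun y => m2 y)) (fun y => rfl)) ?_ ?_
    · apply LinearMap.ext; intro y; apply Subtype.ext; rfl
    · apply LinearMap.ext; intro x
      apply Subtype.ext; apply Subtype.ext
      apply Prod.ext
      · rfl
      · exact (x.2 : π₂ x = 0).symm
  obtain ⟨s₁, hs₁⟩ := Module.projective_lifting_property π₁ LinearMap.id hπ₁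
  obtain ⟨s₂, hs₂⟩ := Module.projective_lifting_property π₂ LinearMap.id hπ₂
  have e₁ : X ≃ₗ[k] P × LinearMap.ker π₁ := splitEquiv π₁ s₁ hs₁
  have e₂ : X ≃ₗ[k] P' × LinearMap.ker π₂ := splitEquiv π₂ s₂ hs₂
  exact ⟨(LinearEquiv.prodComm k _ _).trans <|
    (((LinearEquiv.refl k P').prodCongr k₂.symm).trans <|
      e₂.symm.trans <| e₁.trans <|
        ((LinearEquiv.refl k P).prodCongr k₁).trans (LinearEquiv.prodComm k _ _))⟩

/-- Adding a projective factor preserves resolutions. -/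
theorem HasProjRes.prodProj : ∀ (n : ℕ) {M Q : Type} [AddCommGroup M] [Module k M]
    [AddCommGroup Q] [Module k Q] (_ : HasProjRes k n M) (_ : Module.Projective k Q),
    HasProjRes k n (M × Q)
  | 0, M, Q, _, _, _, _, h, hQ => by
      haveI : Module.Projective k M := h
      exact (inferInstance : Module.Projective k (M × Q))
  | n + 1, M, Q, _, _, _, _, h, hQ => by
      obtain ⟨P, _, _, hP, f, hf, hker⟩ := h
      haveI := hP
      haveI := hQ
      haveI : Module.Projective k (P × Q) := inferInstance
      refine ⟨P × Q, inferInstance, inferInstance, inferInstance, f.prodMap LinearMap.id, ?_, ?_⟩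
      · intro ⟨m, q⟩
        obtain ⟨p, hp⟩ := hf m
        exact ⟨(p, q), by simp [hp]⟩
      · have e2 : (LinearMap.ker f × LinearMap.ker (LinearMap.id : Q →ₗ[k] Q))
            ≃ₗ[k] LinearMap.ker f := by
          refine LinearEquiv.ofLinear (LinearMap.fst k _ _) (LinearMap.inl k _ _) ?_ ?_
          · apply LinearMap.ext; intro x; rfl
          · apply LinearMap.ext; intro p
            apply Prod.ext
            · rfl
            · apply Subtype.ext
              have : p.2.1 = 0 := p.2.2
              exact this.symm
        exact HasProjRes.congr n hker ((kerProdEquiv f LinearMap.id).trans e2).symm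
/-- Finsupp of a projective module is projective. -/
theorem projective_finsupp (ι : Type) {M : Type} [AddCommGroup M] [Module k M]
    (hM : Module.Projective k M) : Module.Projective k (ι →₀ M) := by
  obtain ⟨s, hs⟩ := (Module.projective_def').1 hM
  haveI : Module.Projective k (ι →₀ (M →₀ k)) := by
    haveI : Module.Free k (ι →₀ (M →₀ k)) := Module.Free.finsupp _ _ _
    infer_instance
  refine Module.Projective.of_split (Finsupp.mapRange.linearMap s)
    (Finsupp.mapRange.linearMap (Finsupp.linearCombination k _root_.id)) ?_
  apply LinearMap.ext; intro x
  apply Finsupp.ext; intro i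
  have hsp : ∀ m : M, Finsupp.linearCombination k _root_.id (s m) = m :=
    fun m => congrArg (fun g => g m) (congrArg DFunLike.coe hs)
  simp [Finsupp.mapRange_apply, hsp]

/-- `HasProjRes` is preserved by `ι →₀ ·`. -/
theorem HasProjRes.finsupp (ι : Type) : ∀ (n : ℕ) {M : Type} [AddCommGroup M] [Module k M]
    (_ : HasProjRes k n M), HasProjRes k n (ι →₀ M)
  | 0, M, _, _, h => projective_finsupp ι h
  | n + 1, M, _, _, h => by
      obtain ⟨P, _, _, hP, f, hf, hker⟩ := h
      refine ⟨ι →₀ P, inferInstance, inferInstance, projective_finsupp ι hP,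
        Finsupp.mapRange.linearMap f, ?_, ?_⟩
      · -- surjectivity
        classical
        intro y
        set s : M → P := fun m => if m = 0 then 0 else Function.surjInv hf m with hsdef
        have hs0 : s 0 = 0 := by simp [hsdef]
        have hfs : ∀ m, f (s m) = m := by
          intro m
          by_cases hm : m = 0
          · simp [hsdef, hm]
          · simp [hsdef, hm, Function.surjInv_eq hf]
        refine ⟨Finsupp.mapRange s hs0 y, ?_⟩
        apply Finsupp.ext; intro i
        simp [Finsupp.mapRange_apply, hfs]
      · -- kernel
        classical
        set F := Finsupp.mapRange.linearMap (α := ι) f with hF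
        have hmem : ∀ x : ι →₀ P, x ∈ LinearMap.ker F ↔ ∀ i, f (x i) = 0 := by
          intro x
          rw [LinearMap.mem_ker]
          constructor
          · intro h i
            have := congrArg (fun z => z i) h
            simpa [hF, Finsupp.mapRange_apply] using this
          · intro h
            apply Finsupp.ext; intro i
            simp [hF, Finsupp.mapRange_apply, h i]
        have hink : ∀ y : ι →₀ LinearMap.ker f,
            Finsupp.mapRange.linearMap (LinearMap.ker f).subtype y ∈ LinearMap.ker F := by
          intro y
          rw [hmem]
          intro i
          rw [Finsupp.mapRange.linearMap_apply, Finsupp.mapRange_apply]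
          exact (y i).2
        set inv : (ι →₀ LinearMap.ker f) →ₗ[k] LinearMap.ker F :=
          LinearMap.codRestrict _ (Finsupp.mapRange.linearMap (LinearMap.ker f).subtype) hink
          with hinv
        have hbij : Function.Bijective inv := by
          constructor
          · intro a b hab
            apply Finsupp.ext; intro i
            apply Subtype.ext
            have := congrArg (fun z : LinearMap.ker F => (z : ι →₀ P) i) hab
            simpa [hinv, Finsupp.mapRange_apply] using this
          · rintro ⟨x, hx⟩
            rw [hmem] at hx
            refine ⟨⟨x.support, fun i => ⟨x i, hx i⟩, fun i => ?_⟩, ?_⟩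
            · rw [Finsupp.mem_support_iff]
              have hiff : (⟨x i, hx i⟩ : LinearMap.ker f) = 0 ↔ x i = 0 :=
                ⟨fun h => congrArg Subtype.val h, fun h => Subtype.ext h⟩
              exact not_congr hiff.symm
            · apply Subtype.ext
              apply Finsupp.ext; intro i
              simp only [hinv, LinearMap.codRestrict_apply,
                Finsupp.mapRange.linearMap_apply, Finsupp.mapRange_apply]
              rfl
        exact HasProjRes.congr n (HasProjRes.finsupp ι n hker)
          (LinearEquiv.ofBijective inv hbij)

/-- `ι →₀ (A × B)` splits. -/
noncomputable def finsuppProdEquiv {ι A B : Type} [AddCommGroup A] [Module k A]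
    [AddCommGroup B] [Module k B] :
    (ι →₀ (A × B)) ≃ₗ[k] (ι →₀ A) × (ι →₀ B) := by
  refine LinearEquiv.ofLinear
    (LinearMap.prod (Finsupp.mapRange.linearMap (LinearMap.fst k A B))
      (Finsupp.mapRange.linearMap (LinearMap.snd k A B)))
    ((Finsupp.mapRange.linearMap (LinearMap.inl k A B)).comp (LinearMap.fst k _ _) +
     (Finsupp.mapRange.linearMap (LinearMap.inr k A B)).comp (LinearMap.snd k _ _)) ?_ ?_
  · apply LinearMap.ext; intro p
    apply Prod.ext
    · apply Finsupp.ext; intro i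
      simp [Finsupp.mapRange_apply]
    · apply Finsupp.ext; intro i
      simp [Finsupp.mapRange_apply]
  · apply LinearMap.ext; intro x
    apply Finsupp.ext; intro i
    apply Prod.ext
    · simp [Finsupp.mapRange_apply]
    · simp [Finsupp.mapRange_apply]

/-- Eilenberg swindle shift: `A × (ℕ →₀ A) ≃ (ℕ →₀ A)`. -/
noncomputable def shiftEquiv {A : Type} [AddCommGroup A] [Module k A] :
    (A × (ℕ →₀ A)) ≃ₗ[k] (ℕ →₀ A) := by
  have hsucc : Function.Injective Nat.succ := fun a b h => Nat.succ_injective h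
  have hc : ∀ (g : ℕ →₀ A) (n : ℕ), (Finsupp.lcomapDomain Nat.succ hsucc (M := A) (R := k)) g n
      = g (n + 1) := fun g n => rfl
  have hm0 : ∀ g : ℕ →₀ A, Finsupp.mapDomain Nat.succ g 0 = 0 := fun g =>
    Finsupp.mapDomain_notin_range _ _ (by simp)
  have hms : ∀ (g : ℕ →₀ A) (n : ℕ), Finsupp.mapDomain Nat.succ g (n + 1) = g n :=
    fun g n => Finsupp.mapDomain_apply hsucc g n
  refine LinearEquiv.ofLinear
    ((Finsupp.lsingle 0).comp (LinearMap.fst k A (ℕ →₀ A)) +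
      (Finsupp.lmapDomain A k Nat.succ).comp (LinearMap.snd k A (ℕ →₀ A)))
    (LinearMap.prod (Finsupp.lapply 0) (Finsupp.lcomapDomain Nat.succ hsucc)) ?_ ?_
  · apply LinearMap.ext; intro g
    apply Finsupp.ext; intro n
    cases n with
    | zero => simp [hc, hm0, hms]
    | succ n => simp [hc, hm0, hms, Finsupp.single_eq_of_ne' (Nat.succ_ne_zero n).symm]
  · apply LinearMap.ext; intro p
    apply Prod.ext
    · simp [hc, hm0, hms]
    · apply Finsupp.ext; intro n
      simp [hc, hm0, hms, Finsupp.single_eq_of_ne' (Nat.succ_ne_zero n).symm]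

/-- The Eilenberg swindle: if `T` is a direct factor of `M`, then
`T × (ℕ →₀ M) ≃ (ℕ →₀ M)`. -/
noncomputable def swindleEquiv {T K M : Type} [AddCommGroup T] [Module k T]
    [AddCommGroup K] [Module k K] [AddCommGroup M] [Module k M]
    (e : M ≃ₗ[k] T × K) : (T × (ℕ →₀ M)) ≃ₗ[k] (ℕ →₀ M) := by
  have eInfty : (ℕ →₀ M) ≃ₗ[k] (ℕ →₀ T) × (ℕ →₀ K) :=
    (Finsupp.mapRange.linearEquiv e).trans finsuppProdEquiv
  exact ((LinearEquiv.refl k T).prodCongr eInfty).trans <|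
    (LinearEquiv.prodAssoc k T (ℕ →₀ T) (ℕ →₀ K)).symm.trans <|
    ((shiftEquiv (A := T)).prodCongr (LinearEquiv.refl k (ℕ →₀ K))).trans eInfty.symm

end Generic
section CyclicAlg

variable {C : Type} [CommGroup C] [Fintype C]

/-- The norm element `N = ∑ c` in `ℤ[C]`. -/
noncomputable def Nelt (C : Type) [CommGroup C] [Fintype C] : MonoidAlgebra ℤ C :=
  ∑ c : C, MonoidAlgebra.single c 1

/-- `σ = γ - 1`. -/
noncomputable def sig (γ : C) : MonoidAlgebra ℤ C := MonoidAlgebra.single γ 1 - 1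

/-- Augmentation. -/
noncomputable def eps (C : Type) [CommGroup C] [Fintype C] :
    MonoidAlgebra ℤ C →ₐ[ℤ] ℤ := (MonoidAlgebra.lift ℤ ℤ C) 1

theorem eps_single (c : C) (z : ℤ) : eps C (MonoidAlgebra.single c z) = z := by
  simp [eps, MonoidAlgebra.lift_single]

theorem Nelt_apply (c : C) : (Nelt C).coeff c = 1 := by
  classical
  rw [Nelt, MonoidAlgebra.coeff_sum, Finsupp.finset_sum_apply]
  rw [Finset.sum_eq_single c]
  · simp
  · intro d _ hd
    exact Finsupp.single_eq_of_ne' hd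
  · intro h; exact absurd (Finset.mem_univ c) h

theorem single_mul_Nelt (c : C) : MonoidAlgebra.single c (1 : ℤ) * Nelt C = Nelt C := by
  classical
  rw [Nelt, Finset.mul_sum]
  rw [show (fun d => MonoidAlgebra.single c (1:ℤ) * MonoidAlgebra.single d 1)
      = (fun d => MonoidAlgebra.single (c * d) (1:ℤ)) from funext fun d => by
    rw [MonoidAlgebra.single_mul_single, one_mul]]
  exact Fintype.sum_equiv (Equiv.mulLeft c) _ _ (fun d => rfl)

theorem mul_Nelt (x : MonoidAlgebra ℤ C) : x * Nelt C = (eps C x) • Nelt C := by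
  induction x using MonoidAlgebra.induction_linear with
  | zero => simp
  | add f g hf hg => rw [add_mul, hf, hg, map_add, add_smul]
  | single c z =>
      show MonoidAlgebra.single c z * Nelt C = eps C (MonoidAlgebra.single c z) • Nelt C
      have h1 : (MonoidAlgebra.single c z : MonoidAlgebra ℤ C)
          = z • MonoidAlgebra.single c (1:ℤ) := by
        rw [MonoidAlgebra.smul_single, smul_eq_mul, mul_one]
      rw [h1, smul_mul_assoc, single_mul_Nelt, map_zsmul, eps_single, smul_eq_mul, mul_one]

theorem eps_Nelt : eps C (Nelt C) = Fintype.card C := by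
  rw [Nelt, map_sum]
  rw [show (fun c : C => eps C (MonoidAlgebra.single c 1)) = (fun _ => (1:ℤ)) from
    funext fun c => eps_single c 1]
  simp

theorem sig_mul_Nelt (γ : C) : sig γ * Nelt C = 0 := by
  rw [sig, sub_mul, one_mul, single_mul_Nelt, sub_self]

theorem eps_sig (γ : C) : eps C (sig γ) = 0 := by
  rw [sig, map_sub, map_one, eps_single, sub_self]

/-- Annihilator of `σ` : shift-invariant elements are multiples of the norm. -/
theorem eq_smul_Nelt_of_mul_sig_eq_zero (γ : C) (hγ : ∀ c : C, ∃ k : ℤ, γ ^ k = c)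
    (x : MonoidAlgebra ℤ C) (hx : x * sig γ = 0) : x = (x.coeff 1) • Nelt C := by
  have h1 : x * MonoidAlgebra.single γ 1 = x := by
    have h2 : x * sig γ = x * MonoidAlgebra.single γ 1 - x := by
      rw [sig, mul_sub, mul_one]
    rw [h2] at hx
    exact sub_eq_zero.mp hx
  have hfix : ∀ d : C, x.coeff (d * γ⁻¹) = x.coeff d := by
    intro d
    have := congrArg (fun z : MonoidAlgebra ℤ C => z.coeff d) h1
    simpa [MonoidAlgebra.coeff_mul_single_apply] using this
  have key : ∀ k : ℤ, ∀ d : C, x.coeff (d * γ ^ k) = x.coeff d := by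
    intro k
    induction k using Int.induction_on with
    | zero => intro d; simp
    | succ k ih =>
        intro d
        have h3 := hfix (d * γ ^ ((k : ℤ) + 1))
        have h4 : d * γ ^ ((k : ℤ) + 1) * γ⁻¹ = d * γ ^ (k : ℤ) := by
          rw [zpow_add_one]; group
        rw [h4] at h3
        rw [← h3, ih d]
    | pred k ih =>
        intro d
        have h4 : d * γ ^ (-(k : ℤ) - 1) = (d * γ ^ (-(k : ℤ))) * γ⁻¹ := by
          rw [zpow_sub, zpow_one]; group
        rw [h4, hfix, ih d]
  apply MonoidAlgebra.ext; apply Finsupp.ext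
  intro c
  obtain ⟨k, hk⟩ := hγ c
  have h5 : x.coeff c = x.coeff 1 := by
    rw [← hk, ← one_mul (γ ^ k), key k 1]
  rw [h5, MonoidAlgebra.coeff_smul_apply, Nelt_apply, smul_eq_mul, mul_one]
/-- The augmentation ideal is generated by `σ` when `γ` generates `C`. -/
theorem sum_single_eq (x : MonoidAlgebra ℤ C) :
    ∑ c : C, MonoidAlgebra.single c (x.coeff c) = x := by
  classical
  apply MonoidAlgebra.ext; apply Finsupp.ext; intro d
  rw [MonoidAlgebra.coeff_sum, Finsupp.finset_sum_apply, Finset.sum_eq_single d]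
  · exact Finsupp.single_eq_same
  · intro b _ hb; exact Finsupp.single_eq_of_ne' hb
  · intro h; exact absurd (Finset.mem_univ d) h

theorem eps_eq_sum (x : MonoidAlgebra ℤ C) : eps C x = ∑ c : C, x.coeff c := by
  conv_lhs => rw [← sum_single_eq x]
  rw [map_sum]
  exact Finset.sum_congr rfl (fun c _ => eps_single c (x.coeff c))

theorem mem_span_sig_of_eps_zero (γ : C) (hγ : ∀ c : C, ∃ k : ℤ, γ ^ k = c)
    (x : MonoidAlgebra ℤ C) (hx : eps C x = 0) :
    x ∈ Submodule.span (MonoidAlgebra ℤ C) {sig γ} := by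
  classical
  have hpow : ∀ k : ℤ, MonoidAlgebra.single (γ ^ k) (1:ℤ) - 1
      ∈ Submodule.span (MonoidAlgebra ℤ C) {sig γ} := by
    intro k
    induction k using Int.induction_on with
    | zero =>
        rw [zpow_zero, MonoidAlgebra.one_def]
        simpa using (Submodule.span (MonoidAlgebra ℤ C) {sig γ}).zero_mem
    | succ k ih =>
        have hexp : MonoidAlgebra.single (γ ^ ((k:ℤ) + 1)) (1:ℤ) - 1
            = MonoidAlgebra.single γ 1 * (MonoidAlgebra.single (γ ^ (k:ℤ)) 1 - 1) + sig γ := by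
          rw [mul_sub, MonoidAlgebra.single_mul_single, mul_one, mul_one, sig]
          rw [zpow_add_one, mul_comm (γ ^ (k:ℤ)) γ]
          ring
        rw [hexp]
        exact Submodule.add_mem _ (Submodule.smul_mem _ _ ih)
          (Submodule.mem_span_singleton_self _)
    | pred k ih =>
        have hexp : MonoidAlgebra.single (γ ^ (-(k:ℤ) - 1)) (1:ℤ) - 1
            = MonoidAlgebra.single γ⁻¹ 1 * (MonoidAlgebra.single (γ ^ (-(k:ℤ))) 1 - 1)
              + (MonoidAlgebra.single γ⁻¹ 1 - 1) := by
          rw [mul_sub, MonoidAlgebra.single_mul_single, mul_one, mul_one]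
          rw [zpow_sub, zpow_one, mul_comm (γ ^ (-(k:ℤ))) γ⁻¹]
          ring
        have hinv : MonoidAlgebra.single γ⁻¹ (1:ℤ) - 1
            = -(MonoidAlgebra.single γ⁻¹ 1 * sig γ) := by
          rw [sig, mul_sub, MonoidAlgebra.single_mul_single, mul_one, mul_one, inv_mul_cancel,
            MonoidAlgebra.one_def]
          ring
        rw [hexp]
        refine Submodule.add_mem _ (Submodule.smul_mem _ _ ih) ?_
        rw [hinv]
        exact Submodule.neg_mem _ (Submodule.smul_mem _ _ (Submodule.mem_span_singleton_self _))
  have hc : ∀ c : C, MonoidAlgebra.single c (1:ℤ) - 1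
      ∈ Submodule.span (MonoidAlgebra ℤ C) {sig γ} := by
    intro c
    obtain ⟨k, hk⟩ := hγ c
    rw [← hk]; exact hpow k
  have hsum : (∑ c : C, x.coeff c) = 0 := by rw [← eps_eq_sum, hx]
  have hrepr : x = ∑ c : C, (x.coeff c) • ((MonoidAlgebra.single c (1:ℤ)) - 1) := by
    have h6 : ∑ c : C, (x.coeff c) • ((MonoidAlgebra.single c (1:ℤ)) - 1)
        = (∑ c : C, MonoidAlgebra.single c (x.coeff c)) - ∑ c : C, (x.coeff c) • (1 : MonoidAlgebra ℤ C) := by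
      rw [← Finset.sum_sub_distrib]
      refine Finset.sum_congr rfl (fun c _ => ?_)
      rw [smul_sub, MonoidAlgebra.smul_single, smul_eq_mul, mul_one]
    rw [h6, sum_single_eq, ← Finset.sum_smul, hsum, zero_smul, sub_zero]
  rw [hrepr]
  exact Submodule.sum_mem _ (fun c _ => Submodule.smul_of_tower_mem _ (x.coeff c) (hc c))

/-- surjection onto the span of an element. -/
noncomputable def toSpan (y : MonoidAlgebra ℤ C) :
    MonoidAlgebra ℤ C →ₗ[MonoidAlgebra ℤ C] ↥(Submodule.span (MonoidAlgebra ℤ C) {y}) :=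
  LinearMap.codRestrict _ (LinearMap.toSpanSingleton (MonoidAlgebra ℤ C) (MonoidAlgebra ℤ C) y)
    (fun r => Submodule.smul_mem _ r (Submodule.mem_span_singleton_self y))

theorem toSpan_apply (y x : MonoidAlgebra ℤ C) : ((toSpan y x) : MonoidAlgebra ℤ C) = x * y := by
  simp [toSpan, LinearMap.toSpanSingleton, smul_eq_mul]

theorem toSpan_surj (y : MonoidAlgebra ℤ C) : Function.Surjective (toSpan y) := by
  rintro ⟨v, hv⟩
  obtain ⟨a, ha⟩ := Submodule.mem_span_singleton.mp hv
  exact ⟨a, Subtype.ext (by rw [toSpan_apply, ← smul_eq_mul, ha])⟩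

theorem card_one_of_mul (z : ℤ) (h : z * (Fintype.card C : ℤ) = 1) : Fintype.card C = 1 := by
  have hd : (Fintype.card C : ℤ) ∣ 1 := ⟨z, by rw [← h]; ring⟩
  have := Int.eq_one_of_dvd_one (by positivity) hd
  exact_mod_cast this

/-- coefficient evaluation of the basic identity. -/
theorem smul_Nelt_inj (z w : ℤ) (h : z • Nelt C = w • Nelt C) : z = w := by
  have h2 : (z • Nelt C).coeff 1 = (w • Nelt C).coeff 1 := by rw [h]
  rw [MonoidAlgebra.coeff_smul_apply, MonoidAlgebra.coeff_smul_apply, Nelt_apply, smul_eq_mul, smul_eq_mul,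
    mul_one, mul_one] at h2
  exact h2
variable (γ : C)

theorem not_projective_quot_sig (hγ : ∀ c : C, ∃ k : ℤ, γ ^ k = c)
    (hcard : Fintype.card C ≠ 1) :
    ¬ Module.Projective (MonoidAlgebra ℤ C)
      ((MonoidAlgebra ℤ C) ⧸ Submodule.span (MonoidAlgebra ℤ C) {sig γ}) := by
  intro hproj
  obtain ⟨h, hh⟩ := Module.projective_lifting_property
    (Submodule.span (MonoidAlgebra ℤ C) {sig γ}).mkQ LinearMap.id
    (Submodule.mkQ_surjective _)
  set u := h ((Submodule.span (MonoidAlgebra ℤ C) {sig γ}).mkQ 1) with hu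
  have hu1 : (Submodule.span (MonoidAlgebra ℤ C) {sig γ}).mkQ u
      = (Submodule.span (MonoidAlgebra ℤ C) {sig γ}).mkQ 1 := by
    have := congrArg (fun g => g ((Submodule.span (MonoidAlgebra ℤ C) {sig γ}).mkQ 1))
      (congrArg DFunLike.coe hh)
    simpa [hu] using this
  have hzero : (sig γ) • ((Submodule.span (MonoidAlgebra ℤ C) {sig γ}).mkQ 1)
      = 0 := by
    rw [← map_smul, smul_eq_mul, mul_one, Submodule.mkQ_apply, Submodule.Quotient.mk_eq_zero]
    exact Submodule.mem_span_singleton_self _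
  have hσu : u * sig γ = 0 := by
    have h3 : (sig γ) • u = 0 := by rw [hu, ← map_smul, hzero, map_zero]
    rw [mul_comm]
    rw [smul_eq_mul] at h3
    exact h3
  have hN : u = (u.coeff 1) • Nelt C := eq_smul_Nelt_of_mul_sig_eq_zero γ hγ u hσu
  have hmem : u - 1 ∈ Submodule.span (MonoidAlgebra ℤ C) {sig γ} :=
    (Submodule.Quotient.eq _).mp hu1
  obtain ⟨w, hw⟩ := Submodule.mem_span_singleton.mp hmem
  have e1 : eps C u = (u.coeff 1) * Fintype.card C := by
    rw [hN, map_zsmul, eps_Nelt, smul_eq_mul, MonoidAlgebra.coeff_smul_apply, Nelt_apply, smul_eq_mul,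
      mul_one]
  have e2 : eps C u = 1 := by
    have h4 : u = w • sig γ + 1 := by rw [hw]; ring
    rw [h4, map_add, map_one, smul_eq_mul, map_mul, eps_sig, mul_zero, zero_add]
  exact hcard (card_one_of_mul (u.coeff 1) (by rw [← e1, e2]))

theorem not_projective_span_Nelt (hγ : ∀ c : C, ∃ k : ℤ, γ ^ k = c)
    (hcard : Fintype.card C ≠ 1) :
    ¬ Module.Projective (MonoidAlgebra ℤ C)
      ↥(Submodule.span (MonoidAlgebra ℤ C) {Nelt C}) := by
  intro hproj
  obtain ⟨h, hh⟩ := Module.projective_lifting_property (toSpan (Nelt C)) LinearMap.id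
    (toSpan_surj _)
  set v : ↥(Submodule.span (MonoidAlgebra ℤ C) {Nelt C}) :=
    ⟨Nelt C, Submodule.mem_span_singleton_self _⟩ with hv
  set u := h v with hu
  have huN : u * Nelt C = Nelt C := by
    have h2 := congrArg (fun g => g v) (congrArg DFunLike.coe hh)
    have h3 := congrArg (Subtype.val) h2
    simpa [toSpan_apply] using h3
  have hzv : (sig γ) • v = 0 := by
    apply Subtype.ext
    rw [Submodule.coe_smul, smul_eq_mul]
    show sig γ * (v : MonoidAlgebra ℤ C) = ((0 : ↥(Submodule.span (MonoidAlgebra ℤ C) {Nelt C})) : MonoidAlgebra ℤ C)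
    rw [hv, Submodule.coe_zero, sig_mul_Nelt]
  have hσu : u * sig γ = 0 := by
    have h3 : (sig γ) • u = 0 := by rw [hu, ← map_smul, hzv, map_zero]
    rw [mul_comm]; rw [smul_eq_mul] at h3; exact h3
  have hN : u = (u.coeff 1) • Nelt C := eq_smul_Nelt_of_mul_sig_eq_zero γ hγ u hσu
  have hNN : Nelt C * Nelt C = (Fintype.card C : ℤ) • Nelt C := by
    rw [mul_Nelt, eps_Nelt]
  have h5 : u * Nelt C = ((u.coeff 1) * (Fintype.card C : ℤ)) • Nelt C := by
    conv_lhs => rw [hN]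
    rw [smul_mul_assoc, hNN, smul_smul]
  have hfin : ((u.coeff 1) * (Fintype.card C : ℤ)) • Nelt C = (1 : ℤ) • Nelt C := by
    rw [← h5, huN, one_smul]
  exact hcard (card_one_of_mul (u.coeff 1) (smul_Nelt_inj _ _ hfin))

theorem not_projective_span_sig (hγ : ∀ c : C, ∃ k : ℤ, γ ^ k = c)
    (hcard : Fintype.card C ≠ 1) :
    ¬ Module.Projective (MonoidAlgebra ℤ C)
      ↥(Submodule.span (MonoidAlgebra ℤ C) {sig γ}) := by
  intro hproj
  obtain ⟨h, hh⟩ := Module.projective_lifting_property (toSpan (sig γ)) LinearMap.id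
    (toSpan_surj _)
  set v : ↥(Submodule.span (MonoidAlgebra ℤ C) {sig γ}) :=
    ⟨sig γ, Submodule.mem_span_singleton_self _⟩ with hv
  set u := h v with hu
  have huσ : u * sig γ = sig γ := by
    have h2 := congrArg (fun g => g v) (congrArg DFunLike.coe hh)
    have h3 := congrArg (Subtype.val) h2
    simpa [toSpan_apply] using h3
  have hzv : (Nelt C) • v = 0 := by
    apply Subtype.ext
    rw [Submodule.coe_smul, smul_eq_mul]
    show Nelt C * (v : MonoidAlgebra ℤ C) = ((0 : ↥(Submodule.span (MonoidAlgebra ℤ C) {sig γ})) : MonoidAlgebra ℤ C)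
    rw [hv, Submodule.coe_zero, mul_comm, sig_mul_Nelt]
  have hNu : u * Nelt C = 0 := by
    have h3 : (Nelt C) • u = 0 := by rw [hu, ← map_smul, hzv, map_zero]
    rw [mul_comm]; rw [smul_eq_mul] at h3; exact h3
  have heps0 : eps C u = 0 := by
    have h4 : (eps C u) • Nelt C = (0 : ℤ) • Nelt C := by
      rw [← mul_Nelt, hNu, zero_smul]
    exact smul_Nelt_inj _ _ h4
  have h1mu : (1 - u) * sig γ = 0 := by
    rw [sub_mul, one_mul, huσ, sub_self]
  have hN : 1 - u = ((1 - u).coeff 1) • Nelt C := eq_smul_Nelt_of_mul_sig_eq_zero γ hγ _ h1mu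
  have e1 : eps C (1 - u) = ((1 - u).coeff 1) * Fintype.card C := by
    rw [hN, map_zsmul, eps_Nelt, smul_eq_mul, MonoidAlgebra.coeff_smul_apply, Nelt_apply, smul_eq_mul,
      mul_one]
  have e2 : eps C (1 - u) = 1 := by rw [map_sub, map_one, heps0, sub_zero]
  exact hcard (card_one_of_mul _ (by rw [← e1, e2]))

/-- kernels of the periodic resolution. -/
theorem ker_toSpan_sig (hγ : ∀ c : C, ∃ k : ℤ, γ ^ k = c) :
    LinearMap.ker (toSpan (sig γ)) = Submodule.span (MonoidAlgebra ℤ C) {Nelt C} := by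
  apply le_antisymm
  · intro x hx
    have h1 : x * sig γ = 0 := by
      have := congrArg Subtype.val (hx : toSpan (sig γ) x = 0)
      rw [toSpan_apply] at this
      simpa using this
    have h2 := eq_smul_Nelt_of_mul_sig_eq_zero γ hγ x h1
    rw [h2]
    exact Submodule.smul_of_tower_mem _ _ (Submodule.mem_span_singleton_self _)
  · intro x hx
    obtain ⟨w, hw⟩ := Submodule.mem_span_singleton.mp hx
    rw [LinearMap.mem_ker]
    apply Subtype.ext
    rw [toSpan_apply, ← hw, smul_eq_mul, mul_assoc, mul_comm (Nelt C) (sig γ), sig_mul_Nelt,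
      mul_zero]
    rfl
  
theorem ker_toSpan_Nelt (hγ : ∀ c : C, ∃ k : ℤ, γ ^ k = c) :
    LinearMap.ker (toSpan (Nelt C)) = Submodule.span (MonoidAlgebra ℤ C) {sig γ} := by
  apply le_antisymm
  · intro x hx
    have h1 : x * Nelt C = 0 := by
      have := congrArg Subtype.val (hx : toSpan (Nelt C) x = 0)
      rw [toSpan_apply] at this
      simpa using this
    have h2 : eps C x = 0 := by
      have h4 : (eps C x) • Nelt C = (0 : ℤ) • Nelt C := by
        rw [← mul_Nelt, h1, zero_smul]
      exact smul_Nelt_inj _ _ h4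
    exact mem_span_sig_of_eps_zero γ hγ x h2
  · intro x hx
    obtain ⟨w, hw⟩ := Submodule.mem_span_singleton.mp hx
    rw [LinearMap.mem_ker]
    apply Subtype.ext
    rw [toSpan_apply, ← hw, smul_eq_mul, mul_assoc, sig_mul_Nelt, mul_zero]
    rfl

theorem ker_mkQ_sig :
    LinearMap.ker (Submodule.span (MonoidAlgebra ℤ C) {sig γ}).mkQ
      = Submodule.span (MonoidAlgebra ℤ C) {sig γ} :=
  Submodule.ker_mkQ _
/-- The class of modules appearing in the 2-periodic resolution of the trivial module. -/
def Cyc (γ : C) (A : Type) [AddCommGroup A] [Module (MonoidAlgebra ℤ C) A] : Prop :=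
  (¬ Module.Projective (MonoidAlgebra ℤ C) A) ∧
  ∃ f : (MonoidAlgebra ℤ C) →ₗ[MonoidAlgebra ℤ C] A, Function.Surjective f ∧
    (LinearMap.ker f = Submodule.span (MonoidAlgebra ℤ C) {sig γ} ∨
      LinearMap.ker f = Submodule.span (MonoidAlgebra ℤ C) {Nelt C})

theorem cyc_quot (hγ : ∀ c : C, ∃ k : ℤ, γ ^ k = c) (hcard : Fintype.card C ≠ 1) :
    Cyc γ ((MonoidAlgebra ℤ C) ⧸ Submodule.span (MonoidAlgebra ℤ C) {sig γ}) :=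
  ⟨not_projective_quot_sig γ hγ hcard, (Submodule.span (MonoidAlgebra ℤ C) {sig γ}).mkQ,
    Submodule.mkQ_surjective _, Or.inl (Submodule.ker_mkQ _)⟩

theorem cyc_span_sig (hγ : ∀ c : C, ∃ k : ℤ, γ ^ k = c) (hcard : Fintype.card C ≠ 1) :
    Cyc γ ↥(Submodule.span (MonoidAlgebra ℤ C) {sig γ}) :=
  ⟨not_projective_span_sig γ hγ hcard, toSpan (sig γ), toSpan_surj _,
    Or.inr (ker_toSpan_sig γ hγ)⟩

theorem cyc_span_Nelt (hγ : ∀ c : C, ∃ k : ℤ, γ ^ k = c) (hcard : Fintype.card C ≠ 1) :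
    Cyc γ ↥(Submodule.span (MonoidAlgebra ℤ C) {Nelt C}) :=
  ⟨not_projective_span_Nelt γ hγ hcard, toSpan (Nelt C), toSpan_surj _,
    Or.inl (ker_toSpan_Nelt γ hγ)⟩

/-- Main descent: a `Cyc` module cannot be a direct factor (up to adding a module with a
finite projective resolution) of a module with a finite projective resolution. -/
theorem cyc_no_res (hγ : ∀ c : C, ∃ k : ℤ, γ ^ k = c) (hcard : Fintype.card C ≠ 1) :
    ∀ (n : ℕ) (A B : Type) [AddCommGroup A] [Module (MonoidAlgebra ℤ C) A]
      [AddCommGroup B] [Module (MonoidAlgebra ℤ C) B],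
      Cyc γ A → HasProjRes (MonoidAlgebra ℤ C) n B →
      HasProjRes (MonoidAlgebra ℤ C) n (A × B) → False := by
  intro n
  induction n with
  | zero =>
      intro A B _ _ _ _ hcyc hB hAB
      haveI : Module.Projective (MonoidAlgebra ℤ C) (A × B) := hAB
      exact hcyc.1 (Module.Projective.of_split (LinearMap.inl _ A B) (LinearMap.fst _ A B)
        (LinearMap.ext fun x => rfl))
  | succ n ih =>
      intro A B _ _ _ _ hcyc hB hAB
      obtain ⟨hnp, fA, hfA, hkerA⟩ := hcyc
      obtain ⟨P₂, _, _, hP₂, f₂, hf₂, hk₂⟩ := hB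
      obtain ⟨P₁, _, _, hP₁, f₁, hf₁, hk₁⟩ := hAB
      haveI := hP₁
      haveI := hP₂
      haveI : Module.Projective (MonoidAlgebra ℤ C) (MonoidAlgebra ℤ C × P₂) := inferInstance
      set g := fA.prodMap f₂ with hg
      have hgsurj : Function.Surjective g := by
        intro ⟨a, b⟩
        obtain ⟨s, hs⟩ := hfA a
        obtain ⟨p, hp⟩ := hf₂ b
        exact ⟨(s, p), by simp [hg, hs, hp]⟩
      obtain ⟨e⟩ := schanuel g f₁ hgsurj hf₁
      have r1 : HasProjRes (MonoidAlgebra ℤ C) n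
          (LinearMap.ker f₁ × (MonoidAlgebra ℤ C × P₂)) :=
        HasProjRes.prodProj n hk₁ inferInstance
      have r2 : HasProjRes (MonoidAlgebra ℤ C) n (LinearMap.ker g × P₁) :=
        HasProjRes.congr n r1 e.symm
      have e3 : (LinearMap.ker g × P₁) ≃ₗ[MonoidAlgebra ℤ C]
          (LinearMap.ker fA × (LinearMap.ker f₂ × P₁)) :=
        ((kerProdEquiv fA f₂).prodCongr (LinearEquiv.refl _ P₁)).trans
          (LinearEquiv.prodAssoc _ _ _ _)
      have r3 : HasProjRes (MonoidAlgebra ℤ C) n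
          (LinearMap.ker fA × (LinearMap.ker f₂ × P₁)) :=
        HasProjRes.congr n r2 e3
      have hB' : HasProjRes (MonoidAlgebra ℤ C) n (LinearMap.ker f₂ × P₁) :=
        HasProjRes.prodProj n hk₂ hP₁
      have hcycK : Cyc γ ↥(LinearMap.ker fA) := by
        rcases hkerA with h | h
        · rw [h]; exact cyc_span_sig γ hγ hcard
        · rw [h]; exact cyc_span_Nelt γ hγ hcard
      exact ih (LinearMap.ker fA) (LinearMap.ker f₂ × P₁) hcycK hB' r3
/-- An additive map commuting with the group action is `S`-linear. -/
theorem slin {M N : Type} [AddCommGroup M] [AddCommGroup N]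
    [Module (MonoidAlgebra ℤ C) M] [Module (MonoidAlgebra ℤ C) N] (f : M →+ N)
    (h : ∀ (c : C) (m : M), f (MonoidAlgebra.single c (1:ℤ) • m)
      = MonoidAlgebra.single c (1:ℤ) • f m) :
    ∀ (s : MonoidAlgebra ℤ C) (m : M), f (s • m) = s • f m := by
  intro s m
  induction s using MonoidAlgebra.induction_linear with
  | zero => rw [zero_smul, map_zero, zero_smul]
  | add a b ha hb => rw [add_smul, map_add, ha, hb, add_smul]
  | single c z =>
      show f ((MonoidAlgebra.single c z : MonoidAlgebra ℤ C) • m)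
        = (MonoidAlgebra.single c z : MonoidAlgebra ℤ C) • f m
      have h1 : (MonoidAlgebra.single c z : MonoidAlgebra ℤ C)
          = z • MonoidAlgebra.single c 1 := by rw [MonoidAlgebra.smul_single, smul_eq_mul, mul_one]
      rw [h1, smul_assoc, map_zsmul, h, smul_assoc]

theorem sum_single_apply (ψ : C → ℤ) (d : C) :
    (∑ c : C, MonoidAlgebra.single c (ψ c)).coeff d = ψ d := by
  classical
  rw [MonoidAlgebra.coeff_sum, Finsupp.finset_sum_apply, Finset.sum_eq_single d]
  · exact Finsupp.single_eq_same
  · intro b _ hb; exact Finsupp.single_eq_of_ne' hb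
  · intro h; exact absurd (Finset.mem_univ d) h

variable {G : Type} [Group G] (ι : C →* G)

/-- The induced map of group rings. -/
noncomputable def phiR : MonoidAlgebra ℤ C →+* MonoidAlgebra ℤ G :=
  MonoidAlgebra.mapDomainRingHom ℤ ι

theorem phiR_single (c : C) (z : ℤ) :
    phiR ι (MonoidAlgebra.single c z) = MonoidAlgebra.single (ι c) z := by
  simp [phiR, MonoidAlgebra.mapDomainRingHom, MonoidAlgebra.mapDomain_single]

/-- Restriction of scalars along `phiR`. -/
def Res (_ : C →* G) (M : Type) : Type := M

instance {M : Type} [AddCommGroup M] : AddCommGroup (Res ι M) :=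
  inferInstanceAs (AddCommGroup M)

noncomputable instance {M : Type} [AddCommGroup M] [Module (MonoidAlgebra ℤ G) M] :
    Module (MonoidAlgebra ℤ C) (Res ι M) := Module.compHom M (phiR ι)

theorem res_smul_def {M : Type} [AddCommGroup M] [Module (MonoidAlgebra ℤ G) M]
    (s : MonoidAlgebra ℤ C) (m : Res ι M) : s • m = (phiR ι s) • (show M from m) := rfl

/-- Restriction of a linear map. -/
noncomputable def resLinearMap {M N : Type} [AddCommGroup M] [Module (MonoidAlgebra ℤ G) M]
    [AddCommGroup N] [Module (MonoidAlgebra ℤ G) N] (f : M →ₗ[MonoidAlgebra ℤ G] N) :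
    Res ι M →ₗ[MonoidAlgebra ℤ C] Res ι N where
  toFun := f
  map_add' := f.map_add
  map_smul' := fun s m => f.map_smul (phiR ι s) m

theorem resLinearMap_apply {M N : Type} [AddCommGroup M] [Module (MonoidAlgebra ℤ G) M]
    [AddCommGroup N] [Module (MonoidAlgebra ℤ G) N] (f : M →ₗ[MonoidAlgebra ℤ G] N)
    (m : Res ι M) : resLinearMap ι f m = f m := rfl
theorem mem_range_aux (g : G) :
    g * (Quotient.out (Quotient.mk (QuotientGroup.rightRel ι.range) g))⁻¹
      ∈ Set.range ι := by
  have h1 := Quotient.out_eq (Quotient.mk (QuotientGroup.rightRel ι.range) g)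
  have h2 := Quotient.exact h1
  have h3 := (QuotientGroup.rightRel_apply).mp h2
  obtain ⟨y, hy⟩ := MonoidHom.mem_range.mp h3
  exact ⟨y, hy⟩

/-- coset decomposition `Q × C ≃ G`. -/
noncomputable def cosetEquiv (hι : Function.Injective ι) :
    (Quotient (QuotientGroup.rightRel ι.range) × C) ≃ G where
  toFun p := ι p.2 * (Quotient.out p.1)
  invFun g := (Quotient.mk _ g, Classical.choose (mem_range_aux ι g))
  right_inv g := by
    have hspec := Classical.choose_spec (mem_range_aux ι g)
    show ι _ * _ = g
    rw [hspec]
    group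
  left_inv p := by
    obtain ⟨q, c⟩ := p
    have hq : (Quotient.mk (QuotientGroup.rightRel ι.range) (ι c * Quotient.out q)) = q := by
      have : Quotient.mk (QuotientGroup.rightRel ι.range) (ι c * Quotient.out q)
          = Quotient.mk (QuotientGroup.rightRel ι.range) (Quotient.out q) := by
        apply Quotient.sound
        refine (QuotientGroup.rightRel_apply).mpr (MonoidHom.mem_range.mpr ⟨c⁻¹, ?_⟩)
        rw [map_inv]
        group
      rw [this, Quotient.out_eq]
    have hval : ι c * Quotient.out q
        * (Quotient.out (Quotient.mk (QuotientGroup.rightRel ι.range)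
            (ι c * Quotient.out q)))⁻¹ = ι c := by
      rw [hq]; group
    have hspec := Classical.choose_spec (mem_range_aux ι (ι c * Quotient.out q))
    apply Prod.ext
    · exact hq
    · apply hι
      rw [hspec, hval]

/-- `ℤG` is a free `ℤC`-module. -/
noncomputable def resBasisEquiv (hι : Function.Injective ι) :
    Res ι (MonoidAlgebra ℤ G) ≃ₗ[MonoidAlgebra ℤ C]
      ((Quotient (QuotientGroup.rightRel ι.range)) →₀ MonoidAlgebra ℤ C) := by
  classical
  set τ := cosetEquiv ι hι with hτ
  set E : MonoidAlgebra ℤ G ≃ₗ[ℤ] ((Quotient (QuotientGroup.rightRel ι.range)) →₀ MonoidAlgebra ℤ C) :=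
    (MonoidAlgebra.coeffLinearEquiv ℤ).trans (((Finsupp.domLCongr τ.symm :
      (G →₀ ℤ) ≃ₗ[ℤ] ((Quotient (QuotientGroup.rightRel ι.range) × C) →₀ ℤ)).trans
    (Finsupp.finsuppProdLEquiv ℤ)).trans
      (Finsupp.mapRange.linearEquiv (MonoidAlgebra.coeffLinearEquiv ℤ).symm)) with hE
  have hEapply : ∀ (x : MonoidAlgebra ℤ G) (q : Quotient (QuotientGroup.rightRel ι.range)) (c : C),
      (E x q).coeff c = x.coeff (ι c * Quotient.out q) := by
    intro x q c
    rw [hE]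
    rw [LinearEquiv.trans_apply, LinearEquiv.trans_apply, LinearEquiv.trans_apply,
      Finsupp.mapRange.linearEquiv_apply, Finsupp.mapRange_apply, Finsupp.domLCongr_apply,
      Finsupp.domCongr_apply]
    erw [Finsupp.curryLinearEquiv_apply]
    show ((Finsupp.equivMapDomain τ.symm x.coeff).curry q) c = _
    rw [Finsupp.curry_apply, Finsupp.equivMapDomain_apply, Equiv.symm_symm]
    rfl
  have hsmul : ∀ (s : MonoidAlgebra ℤ C) (x : Res ι (MonoidAlgebra ℤ G)),
      E (s • x) = s • E x := by
    have hgen : ∀ (c₀ : C) (x : Res ι (MonoidAlgebra ℤ G)),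
        E (MonoidAlgebra.single c₀ (1:ℤ) • x) = MonoidAlgebra.single c₀ (1:ℤ) • E x := by
      intro c₀ x
      apply Finsupp.ext; intro q
      apply MonoidAlgebra.ext; apply Finsupp.ext; intro c
      have hL : (MonoidAlgebra.single c₀ (1:ℤ) • x : Res ι (MonoidAlgebra ℤ G))
          = MonoidAlgebra.single (ι c₀) (1:ℤ) * (show MonoidAlgebra ℤ G from x) := by
        rw [res_smul_def, phiR_single]
        rfl
      have harg : (ι c₀)⁻¹ * (ι c * Quotient.out q) = ι (c₀⁻¹ * c) * Quotient.out q := by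
        rw [map_mul, map_inv]; group
      erw [hEapply]; rw [hL, MonoidAlgebra.coeff_single_mul_apply, one_mul]
      rw [Finsupp.smul_apply, smul_eq_mul, MonoidAlgebra.coeff_single_mul_apply, one_mul]; erw [hEapply]; rw [harg]
    intro s x
    let f0 : Res ι (MonoidAlgebra ℤ G) →+
        ((Quotient (QuotientGroup.rightRel ι.range)) →₀ MonoidAlgebra ℤ C) :=
      { toFun := fun y => E y
        map_zero' := E.map_zero
        map_add' := E.map_add }
    exact slin f0 hgen s x
  exact
    { toFun := E
      invFun := E.symm
      left_inv := E.left_inv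
      right_inv := E.right_inv
      map_add' := E.map_add
      map_smul' := hsmul }

theorem res_free (hι : Function.Injective ι) :
    Module.Free (MonoidAlgebra ℤ C) (Res ι (MonoidAlgebra ℤ G)) :=
  Module.Free.of_basis (Module.Basis.ofRepr (resBasisEquiv ι hι))

/-- identification `Res ι (M →₀ ℤG) ≃ M →₀ Res ι ℤG`. -/
noncomputable def resFinsuppEquiv (M : Type) :
    Res ι (M →₀ MonoidAlgebra ℤ G) ≃ₗ[MonoidAlgebra ℤ C]
      (M →₀ Res ι (MonoidAlgebra ℤ G)) where
  toFun x := x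
  invFun x := x
  left_inv _ := rfl
  right_inv _ := rfl
  map_add' _ _ := rfl
  map_smul' s x := rfl

/-- Projectivity descends along restriction. -/
theorem res_projective (hι : Function.Injective ι) {M : Type} [AddCommGroup M]
    [Module (MonoidAlgebra ℤ G) M] (h : Module.Projective (MonoidAlgebra ℤ G) M) :
    Module.Projective (MonoidAlgebra ℤ C) (Res ι M) := by
  haveI : Module.Free (MonoidAlgebra ℤ C) (Res ι (MonoidAlgebra ℤ G)) := res_free ι hι
  haveI : Module.Free (MonoidAlgebra ℤ C) (M →₀ Res ι (MonoidAlgebra ℤ G)) :=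
    Module.Free.finsupp _ _ _
  haveI hproj1 : Module.Projective (MonoidAlgebra ℤ C) (M →₀ Res ι (MonoidAlgebra ℤ G)) :=
    inferInstance
  haveI hproj2 : Module.Projective (MonoidAlgebra ℤ C) (Res ι (M →₀ MonoidAlgebra ℤ G)) :=
    Module.Projective.of_split (resFinsuppEquiv ι M).toLinearMap
      (resFinsuppEquiv ι M).symm.toLinearMap
      (LinearMap.ext fun x => (resFinsuppEquiv ι M).symm_apply_apply x)
  obtain ⟨s, hs⟩ := (Module.projective_def').1 h
  have hsp : ∀ m : M, Finsupp.linearCombination _ _root_.id (s m) = m :=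
    fun m => congrArg (fun g => g m) (congrArg DFunLike.coe hs)
  refine Module.Projective.of_split (resLinearMap ι s)
    (resLinearMap ι (Finsupp.linearCombination _ _root_.id)) ?_
  apply LinearMap.ext; intro x
  show Finsupp.linearCombination _ _root_.id (s x) = x
  exact hsp x

/-- kernels commute with restriction. -/
noncomputable def resKerEquiv {M N : Type} [AddCommGroup M] [Module (MonoidAlgebra ℤ G) M]
    [AddCommGroup N] [Module (MonoidAlgebra ℤ G) N] (f : M →ₗ[MonoidAlgebra ℤ G] N) :
    ↥(LinearMap.ker (resLinearMap ι f)) ≃ₗ[MonoidAlgebra ℤ C]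
      Res ι ↥(LinearMap.ker f) where
  toFun x := show ↥(LinearMap.ker f) from ⟨x.1, x.2⟩
  invFun y := ⟨(y : ↥(LinearMap.ker f)).1, (y : ↥(LinearMap.ker f)).2⟩
  left_inv x := rfl
  right_inv y := rfl
  map_add' x y := rfl
  map_smul' s x := rfl

/-- Main transfer: finite f.g. projective resolutions restrict. -/
theorem res_hasProjRes (hι : Function.Injective ι) :
    ∀ (n : ℕ) (M : Type) [AddCommGroup M] [Module (MonoidAlgebra ℤ G) M],
      HasFinFGProjRes (MonoidAlgebra ℤ G) n M →
        HasProjRes (MonoidAlgebra ℤ C) n (Res ι M) := by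
  intro n
  induction n with
  | zero =>
      intro M _ _ h
      exact res_projective ι hι h.2
  | succ n ih =>
      intro M _ _ h
      obtain ⟨k, P, hfin, hproj, f, hsurj, hker⟩ := h
      refine ⟨Res ι ↥P, inferInstance, inferInstance, res_projective ι hι hproj,
        resLinearMap ι f, fun y => hsurj y, ?_⟩
      exact HasProjRes.congr n (ih ↥(LinearMap.ker f) hker) (resKerEquiv ι f).symm
/-- Coefficient restriction `ℤG → ℤC`. -/
noncomputable def comapFun (r : Res ι (MonoidAlgebra ℤ G)) : MonoidAlgebra ℤ C :=
  ∑ c : C, MonoidAlgebra.single c ((show MonoidAlgebra ℤ G from r).coeff (ι c))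

theorem comapFun_apply (r : Res ι (MonoidAlgebra ℤ G)) (d : C) :
    (comapFun ι r).coeff d = (show MonoidAlgebra ℤ G from r).coeff (ι d) :=
  sum_single_apply _ d

noncomputable def comapL (hι : Function.Injective ι) :
    Res ι (MonoidAlgebra ℤ G) →ₗ[MonoidAlgebra ℤ C] MonoidAlgebra ℤ C := by
  have hadd : ∀ r s : Res ι (MonoidAlgebra ℤ G),
      comapFun ι (r + s) = comapFun ι r + comapFun ι s := by
    intro r s
    apply MonoidAlgebra.ext; apply Finsupp.ext; intro d
    rw [MonoidAlgebra.coeff_add, Finsupp.add_apply, comapFun_apply, comapFun_apply, comapFun_apply]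
    rfl
  have hzero : comapFun ι (0 : Res ι (MonoidAlgebra ℤ G)) = 0 := by
    apply MonoidAlgebra.ext; apply Finsupp.ext; intro d
    rw [comapFun_apply]
    rfl
  have hgen : ∀ (c₀ : C) (r : Res ι (MonoidAlgebra ℤ G)),
      comapFun ι (MonoidAlgebra.single c₀ (1:ℤ) • r)
        = MonoidAlgebra.single c₀ (1:ℤ) • comapFun ι r := by
    intro c₀ r
    apply MonoidAlgebra.ext; apply Finsupp.ext; intro d
    rw [comapFun_apply]
    have hL : (MonoidAlgebra.single c₀ (1:ℤ) • r : Res ι (MonoidAlgebra ℤ G))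
        = MonoidAlgebra.single (ι c₀) (1:ℤ) * (show MonoidAlgebra ℤ G from r) := by
      rw [res_smul_def, phiR_single]
      rfl
    rw [hL, MonoidAlgebra.coeff_single_mul_apply, one_mul]
    rw [smul_eq_mul, MonoidAlgebra.coeff_single_mul_apply, one_mul, comapFun_apply]
    have harg : ι (c₀⁻¹ * d) = (ι c₀)⁻¹ * ι d := by rw [map_mul, map_inv]
    rw [harg]
  exact
    { toFun := comapFun ι
      map_add' := hadd
      map_smul' := fun s r => slin
        { toFun := comapFun ι, map_zero' := hzero, map_add' := hadd } hgen s r }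

theorem comapL_one (hι : Function.Injective ι) :
    comapL ι hι (1 : MonoidAlgebra ℤ G) = 1 := by
  apply MonoidAlgebra.ext; apply Finsupp.ext; intro d
  show (comapFun ι (1 : MonoidAlgebra ℤ G)).coeff d = (1 : MonoidAlgebra ℤ C).coeff d
  erw [comapFun_apply]
  show (Finsupp.single (1:G) (1:ℤ)) (ι d) = (Finsupp.single (1:C) (1:ℤ)) d
  by_cases hd : d = 1
  · subst hd
    rw [map_one, Finsupp.single_eq_same, Finsupp.single_eq_same]
  · have hne : ι d ≠ 1 := fun h => hd (hι (by rw [h, map_one]))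
    rw [Finsupp.single_eq_of_ne' (Ne.symm hne), Finsupp.single_eq_of_ne' (Ne.symm hd)]

theorem comapL_mul_X (hι : Function.Injective ι) (γ : C) (w : MonoidAlgebra ℤ G) :
    comapL ι hι (w * (MonoidAlgebra.single (ι γ) (1:ℤ) - 1))
      = comapL ι hι w * sig γ := by
  have key : comapL ι hι (w * MonoidAlgebra.single (ι γ) (1:ℤ))
      = comapL ι hι w * MonoidAlgebra.single γ (1:ℤ) := by
    apply MonoidAlgebra.ext; apply Finsupp.ext; intro d
    show (comapFun ι _).coeff d = _
    erw [comapFun_apply]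
    show (w * MonoidAlgebra.single (ι γ) (1:ℤ)).coeff (ι d) = _
    rw [MonoidAlgebra.coeff_mul_single_apply, mul_one]
    rw [MonoidAlgebra.coeff_mul_single_apply, mul_one]
    show w.coeff (ι d * (ι γ)⁻¹) = (comapFun ι w).coeff (d * γ⁻¹)
    erw [comapFun_apply]
    have harg : ι (d * γ⁻¹) = ι d * (ι γ)⁻¹ := by rw [map_mul, map_inv]
    rw [harg]
  have hsub : w * (MonoidAlgebra.single (ι γ) (1:ℤ) - 1)
      = w * MonoidAlgebra.single (ι γ) (1:ℤ) - w := by rw [mul_sub, mul_one]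
  rw [hsub]; erw [map_sub, key]; rw [sig]
  ring

/-- `φ` as an `S`-linear map into the restricted group ring. -/
noncomputable def phiLinear : MonoidAlgebra ℤ C →ₗ[MonoidAlgebra ℤ C]
    Res ι (MonoidAlgebra ℤ G) where
  toFun s := phiR ι s
  map_add' s t := map_add _ s t
  map_smul' s t := by
    show phiR ι (s • t) = s • (show Res ι (MonoidAlgebra ℤ G) from phiR ι t)
    rw [smul_eq_mul, map_mul]
    rfl

/-- The final contradiction. -/
theorem final_contra (γ : C) (hγ : ∀ c : C, ∃ k : ℤ, γ ^ k = c)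
    (hcard : Fintype.card C ≠ 1) (hι : Function.Injective ι) (n : ℕ)
    (hres : HasProjRes (MonoidAlgebra ℤ C) n
      (Res ι ((MonoidAlgebra ℤ G) ⧸ Submodule.span (MonoidAlgebra ℤ G)
        {MonoidAlgebra.single (ι γ) (1:ℤ) - 1}))) : False := by
  classical
  set Xγ : MonoidAlgebra ℤ G := MonoidAlgebra.single (ι γ) (1:ℤ) - 1 with hXγ
  set p : Submodule (MonoidAlgebra ℤ G) (MonoidAlgebra ℤ G) :=
    Submodule.span (MonoidAlgebra ℤ G) {Xγ} with hp
  set q : Res ι (MonoidAlgebra ℤ G) →ₗ[MonoidAlgebra ℤ C] Res ι ((MonoidAlgebra ℤ G) ⧸ p) :=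
    resLinearMap ι p.mkQ with hq
  have hqsurj : Function.Surjective q := fun y => Submodule.mkQ_surjective p y
  set K := LinearMap.ker q with hK
  have hmemK : ∀ z : Res ι (MonoidAlgebra ℤ G), z ∈ K ↔ (show MonoidAlgebra ℤ G from z) ∈ p := by
    intro z
    rw [hK, LinearMap.mem_ker]
    show p.mkQ z = 0 ↔ _
    exact Submodule.Quotient.mk_eq_zero p
  set D := Res ι (MonoidAlgebra ℤ G) ⧸ K with hD
  have eD : D ≃ₗ[MonoidAlgebra ℤ C] Res ι ((MonoidAlgebra ℤ G) ⧸ p) :=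
    LinearMap.quotKerEquivOfSurjective q hqsurj
  have hresD : HasProjRes (MonoidAlgebra ℤ C) n D := HasProjRes.congr n hres eD.symm
  -- the projection D → T (the trivial module)
  set ρ : Res ι (MonoidAlgebra ℤ G) →ₗ[MonoidAlgebra ℤ C]
      ((MonoidAlgebra ℤ C) ⧸ Submodule.span (MonoidAlgebra ℤ C) {sig γ}) :=
    (Submodule.span (MonoidAlgebra ℤ C) {sig γ}).mkQ.comp (comapL ι hι) with hρ
  have hKkerρ : K ≤ LinearMap.ker ρ := by
    intro z hz
    rw [LinearMap.mem_ker]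
    have hzp : (show MonoidAlgebra ℤ G from z) ∈ p := (hmemK z).mp hz
    obtain ⟨w, hw⟩ := Submodule.mem_span_singleton.mp hzp
    show (Submodule.span (MonoidAlgebra ℤ C) {sig γ}).mkQ (comapL ι hι z) = 0
    have hzw : (show MonoidAlgebra ℤ G from z) = w * Xγ := by rw [← hw]; rfl
    have : comapL ι hι z = comapL ι hι w * sig γ := by
      rw [show (z : Res ι (MonoidAlgebra ℤ G)) = (show Res ι (MonoidAlgebra ℤ G) from w * Xγ)
        from hzw]
      exact comapL_mul_X ι hι γ w
    rw [this, Submodule.mkQ_apply, Submodule.Quotient.mk_eq_zero]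
    exact Submodule.smul_mem _ _ (Submodule.mem_span_singleton_self _)
  set π : D →ₗ[MonoidAlgebra ℤ C]
      ((MonoidAlgebra ℤ C) ⧸ Submodule.span (MonoidAlgebra ℤ C) {sig γ}) :=
    K.liftQ ρ hKkerρ with hπ
  -- the section T → D
  have hsec : Submodule.span (MonoidAlgebra ℤ C) {sig γ}
      ≤ LinearMap.ker (K.mkQ.comp (phiLinear ι)) := by
    rw [Submodule.span_le]
    intro y hy
    rw [Set.mem_singleton_iff] at hy
    subst hy
    rw [SetLike.mem_coe, LinearMap.mem_ker, LinearMap.comp_apply]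
    have hphi : phiLinear ι (sig γ) = (show Res ι (MonoidAlgebra ℤ G) from Xγ) := by
      show phiR ι (sig γ) = Xγ
      rw [sig, hXγ, map_sub, map_one, phiR_single]
    rw [hphi, Submodule.mkQ_apply, Submodule.Quotient.mk_eq_zero, hmemK]
    exact Submodule.mem_span_singleton_self _
  set ιT : ((MonoidAlgebra ℤ C) ⧸ Submodule.span (MonoidAlgebra ℤ C) {sig γ})
      →ₗ[MonoidAlgebra ℤ C] D :=
    (Submodule.span (MonoidAlgebra ℤ C) {sig γ}).liftQ (K.mkQ.comp (phiLinear ι)) hsec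
    with hιT
  have hsplit : π.comp ιT = LinearMap.id := by
    apply Submodule.linearMap_qext
    apply LinearMap.ext_ring
    show π (ιT ((Submodule.span (MonoidAlgebra ℤ C) {sig γ}).mkQ 1))
      = (LinearMap.id (R := MonoidAlgebra ℤ C))
        ((Submodule.span (MonoidAlgebra ℤ C) {sig γ}).mkQ (1 : MonoidAlgebra ℤ C))
    rw [Submodule.mkQ_apply, hιT, Submodule.liftQ_apply, LinearMap.comp_apply]
    rw [hπ, Submodule.mkQ_apply, Submodule.liftQ_apply]
    have hone : phiLinear ι (1 : MonoidAlgebra ℤ C) = (1 : MonoidAlgebra ℤ G) :=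
      map_one (phiR ι)
    rw [hone, hρ]; erw [LinearMap.comp_apply, comapL_one]
    rfl
  have eSplit : D ≃ₗ[MonoidAlgebra ℤ C]
      ((MonoidAlgebra ℤ C) ⧸ Submodule.span (MonoidAlgebra ℤ C) {sig γ}) × (LinearMap.ker π) :=
    splitEquiv π ιT hsplit
  have hinf : HasProjRes (MonoidAlgebra ℤ C) n (ℕ →₀ D) := HasProjRes.finsupp ℕ n hresD
  have hsw : ((((MonoidAlgebra ℤ C) ⧸ Submodule.span (MonoidAlgebra ℤ C) {sig γ})) × (ℕ →₀ D))
      ≃ₗ[MonoidAlgebra ℤ C] (ℕ →₀ D) := swindleEquiv eSplit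
  have hTD : HasProjRes (MonoidAlgebra ℤ C) n
      ((((MonoidAlgebra ℤ C) ⧸ Submodule.span (MonoidAlgebra ℤ C) {sig γ})) × (ℕ →₀ D)) :=
    HasProjRes.congr n hinf hsw.symm
  exact cyc_no_res γ hγ hcard n
    ((MonoidAlgebra ℤ C) ⧸ Submodule.span (MonoidAlgebra ℤ C) {sig γ}) (ℕ →₀ D)
    (cyc_quot γ hγ hcard) hinf hTD

end CyclicAlg

/-- Regular coherent groups are torsionfree: if every finitely presented module over the
integral group ring `ℤG` possesses a finite-dimensional resolution by finitely generated
projective `ℤG`-modules, then `G` has no nontrivial finite subgroup. -/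
theorem regular_coherent_group_torsionfree (G : Type) [Group G]
    (hreg : ∀ (M : Type) [AddCommGroup M] [Module (MonoidAlgebra ℤ G) M],
      Module.FinitePresentation (MonoidAlgebra ℤ G) M →
      ∃ n, HasFinFGProjRes (MonoidAlgebra ℤ G) n M) :
    ∀ F : Subgroup G, Finite F → F = ⊥ := by
  intro F hF
  by_contra hne
  haveI := hF
  obtain ⟨x, hx⟩ := Subgroup.ne_bot_iff_exists_ne_one.mp hne
  have hford : IsOfFinOrder ((x : G)) := F.subtype.isOfFinOrder (isOfFinOrder_of_finite x)
  haveI : Finite ↥(Subgroup.zpowers (x : G)) := hford.finite_zpowers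
  haveI : Fintype ↥(Subgroup.zpowers (x : G)) := Fintype.ofFinite _
  letI : CommGroup ↥(Subgroup.zpowers (x : G)) :=
    { (inferInstance : Group ↥(Subgroup.zpowers (x : G))) with
      mul_comm := fun a b => Subtype.ext (Subgroup.mul_comm_of_mem_isMulCommutative _ a.2 b.2) }
  set γ : ↥(Subgroup.zpowers (x : G)) := ⟨(x : G), Subgroup.mem_zpowers _⟩ with hγdef
  have hγ : ∀ c : ↥(Subgroup.zpowers (x : G)), ∃ k : ℤ, γ ^ k = c := by
    intro c
    obtain ⟨k, hk⟩ := Subgroup.mem_zpowers_iff.mp c.2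
    refine ⟨k, ?_⟩
    apply Subtype.ext
    rw [Subgroup.coe_zpow]
    exact hk
  have hcard : Fintype.card ↥(Subgroup.zpowers (x : G)) ≠ 1 := by
    rw [← Nat.card_eq_fintype_card, Nat.card_zpowers]
    intro h
    exact hx (OneMemClass.coe_eq_one.mp (orderOf_eq_one_iff.mp h))
  set ι := (Subgroup.zpowers (x : G)).subtype with hιdef
  have hι : Function.Injective ι := Subgroup.subtype_injective _
  have hfp : Module.FinitePresentation (MonoidAlgebra ℤ G)
      ((MonoidAlgebra ℤ G) ⧸ Submodule.span (MonoidAlgebra ℤ G)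
        {MonoidAlgebra.single (ι γ) (1:ℤ) - 1}) := by
    refine Module.finitePresentation_of_surjective
      (Submodule.span (MonoidAlgebra ℤ G) {MonoidAlgebra.single (ι γ) (1:ℤ) - 1}).mkQ
      (Submodule.mkQ_surjective _) ?_
    rw [Submodule.ker_mkQ]
    exact Submodule.fg_span_singleton _
  obtain ⟨n, hn⟩ := hreg ((MonoidAlgebra ℤ G) ⧸ Submodule.span (MonoidAlgebra ℤ G)
    {MonoidAlgebra.single (ι γ) (1:ℤ) - 1}) hfp
  exact final_contra ι γ hγ hcard hι n (res_hasProjRes ι hι n _ hn)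
end

section
/- Let R be a ring and R[n̲] = R[t_0,…,t_n]/(t_0+⋯+t_n−1). The ring homomorphisms h_f : R[X][n̲] → R[X][n̲] sending X to (Σ_{j ∈ f⁻¹(0)} t_j)·X, indexed by order-preserving maps f : [n] → [1], constitute a simplicial homotopy from the identity of the simplicial ring R[X][•] to the endomorphism sending X to 0. Consequently the inclusion R[•] → R[X][•] is a simplicial homotopy equivalence of simplicial rings. -/
/-- The polynomial ring `R[t_0, …, t_n]` (over an arbitrary, possibly noncommutative,
ring `R`, with central variables), modelled as the monoid algebra of `Fin (n+1) →₀ ℕ`. -/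
def FreeVarsRing (R : Type) [Ring R] (n : ℕ) : Type :=
  AddMonoidAlgebra R (Fin (n + 1) →₀ ℕ)

noncomputable instance (R : Type) [Ring R] (n : ℕ) : Ring (FreeVarsRing R n) :=
  inferInstanceAs (Ring (AddMonoidAlgebra R (Fin (n + 1) →₀ ℕ)))

/-- The element `t_0 + ⋯ + t_n` of `R[t_0, …, t_n]`. -/
noncomputable def sumVars (R : Type) [Ring R] (n : ℕ) : FreeVarsRing R n :=
  ∑ j : Fin (n + 1), AddMonoidAlgebra.single (Finsupp.single j 1) (1 : R)

/-- The relation imposing `t_0 + ⋯ + t_n = 1`. -/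
def simpRel (R : Type) [Ring R] (n : ℕ) : FreeVarsRing R n → FreeVarsRing R n → Prop :=
  fun a b => a = sumVars R n ∧ b = 1

/-- The ring `R[n̲] = R[t_0, …, t_n]/(t_0 + ⋯ + t_n − 1)`. -/
def SimplexRing (R : Type) [Ring R] (n : ℕ) : Type := RingQuot (simpRel R n)

noncomputable instance (R : Type) [Ring R] (n : ℕ) : Ring (SimplexRing R n) :=
  inferInstanceAs (Ring (RingQuot (simpRel R n)))

/-- The generator `t_k` of `R[n̲]`. -/
noncomputable def tVar (R : Type) [Ring R] (n : ℕ) (k : Fin (n + 1)) : SimplexRing R n :=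
  RingQuot.mkRingHom (simpRel R n) (AddMonoidAlgebra.single (Finsupp.single k 1) (1 : R))

/-- The constant `r ∈ R` viewed in `R[n̲]`. -/
noncomputable def constSR (R : Type) [Ring R] (n : ℕ) (r : R) : SimplexRing R n :=
  RingQuot.mkRingHom (simpRel R n) (AddMonoidAlgebra.single 0 r)

lemma single_one_commute (R : Type) [Ring R] (n : ℕ) (m : Fin (n + 1) →₀ ℕ)
    (y : FreeVarsRing R n) :
    Commute (AddMonoidAlgebra.single m (1 : R) : FreeVarsRing R n) y := by
  show Commute (AddMonoidAlgebra.single m (1 : R)) (y : AddMonoidAlgebra R (Fin (n+1) →₀ ℕ))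
  induction y using AddMonoidAlgebra.induction with
  | zero => exact Commute.zero_right _
  | single_add a b f _ _ ih =>
      have h2 : Commute (AddMonoidAlgebra.single m (1 : R))
          (AddMonoidAlgebra.single a b : AddMonoidAlgebra R (Fin (n+1) →₀ ℕ)) := by
        show _ = _
        rw [AddMonoidAlgebra.single_mul_single, AddMonoidAlgebra.single_mul_single,
          one_mul, mul_one, add_comm m a]
      exact Commute.add_right h2 ih

lemma tVar_commute (R : Type) [Ring R] (n : ℕ) (k : Fin (n + 1)) (x : SimplexRing R n) :
    Commute (tVar R n k) x := by
  obtain ⟨y, rfl⟩ := RingQuot.mkRingHom_surjective (simpRel R n) x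
  exact (single_one_commute R n (Finsupp.single k 1) y).map (RingQuot.mkRingHom (simpRel R n))

lemma sum_tVar_eq_one (R : Type) [Ring R] (n : ℕ) :
    ∑ j : Fin (n + 1), tVar R n j = 1 := by
  have h1 : RingQuot.mkRingHom (simpRel R n) (sumVars R n)
      = RingQuot.mkRingHom (simpRel R n) 1 :=
    RingQuot.mkRingHom_rel ⟨rfl, rfl⟩
  have : ∑ j : Fin (n + 1), tVar R n j
      = RingQuot.mkRingHom (simpRel R n) (sumVars R n) := by
    rw [sumVars]
    exact (map_sum (RingQuot.mkRingHom (simpRel R n))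
      (fun j => AddMonoidAlgebra.single (Finsupp.single j 1) (1 : R)) Finset.univ).symm
  rw [this, h1, map_one]
  rfl

/-- Let `R` be a ring, `R[n̲] = R[t_0,…,t_n]/(t_0+⋯+t_n−1)`, and let `F` be the simplicial
structure maps of `R[•]` (with `f*(t_k) = Σ_{j ∈ f⁻¹(k)} t_j`); the structure maps of the
simplicial ring `R[X][•]` are `Polynomial.mapRingHom (F f)`.  The ring homomorphisms
`h_f : R[X][n̲] → R[X][n̲]` fixing coefficients and sending `X` to `(Σ_{j ∈ f⁻¹(0)} t_j)·X`,
indexed by order-preserving maps `f : [n] → [1]`, constitute a simplicial homotopy from the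
identity of `R[X][•]` (at the vertex `f ≡ 0`) to the endomorphism `X ↦ 0` (at the vertex
`f ≡ 1`).  Consequently the inclusion `R[•] → R[X][•]` (given by `Polynomial.C`) is a
simplicial homotopy equivalence of simplicial rings, with homotopy inverse the simplicial
retraction `ev : R[X][•] → R[•]`, `X ↦ 0`. -/
theorem polynomial_simplicial_homotopy (R : Type) [Ring R]
    (F : ∀ n m : ℕ, (Fin (n + 1) →o Fin (m + 1)) → (SimplexRing R m →+* SimplexRing R n))
    (hFt : ∀ (n m : ℕ) (f : Fin (n + 1) →o Fin (m + 1)) (k : Fin (m + 1)),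
      F n m f (tVar R m k) = ∑ j ∈ Finset.univ.filter (fun j => f j = k), tVar R n j)
    (hFc : ∀ (n m : ℕ) (f : Fin (n + 1) →o Fin (m + 1)) (r : R),
      F n m f (constSR R m r) = constSR R n r)
    (hFid : ∀ n : ℕ, F n n OrderHom.id = RingHom.id (SimplexRing R n))
    (hFcomp : ∀ (n m l : ℕ) (f : Fin (n + 1) →o Fin (m + 1)) (g : Fin (m + 1) →o Fin (l + 1)),
      F n l (g.comp f) = (F n m f).comp (F m l g)) :
    ∃ (h : ∀ n : ℕ, (Fin (n + 1) →o Fin 2) →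
        (Polynomial (SimplexRing R n) →+* Polynomial (SimplexRing R n)))
      (ev : ∀ n : ℕ, Polynomial (SimplexRing R n) →+* SimplexRing R n),
      -- `h_f` fixes the coefficient ring `R[n̲]` …
      (∀ (n : ℕ) (f : Fin (n + 1) →o Fin 2) (a : SimplexRing R n),
        h n f (Polynomial.C a) = Polynomial.C a) ∧
      -- … and sends `X` to `(Σ_{j ∈ f⁻¹(0)} t_j)·X`
      (∀ (n : ℕ) (f : Fin (n + 1) →o Fin 2),
        h n f Polynomial.X =
          Polynomial.C (∑ j ∈ Finset.univ.filter (fun j => f j = 0), tVar R n j) *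
            Polynomial.X) ∧
      -- the `h_f` form a simplicial map `R[X][•] × Δ¹_• → R[X][•]`
      (∀ (n n' : ℕ) (g : Fin (n' + 1) →o Fin (n + 1)) (f : Fin (n + 1) →o Fin 2),
        (h n' (f.comp g)).comp (Polynomial.mapRingHom (F n' n g)) =
          (Polynomial.mapRingHom (F n' n g)).comp (h n f)) ∧
      -- at the vertex `f ≡ 0` the homotopy restricts to the identity
      (∀ (n : ℕ) (f : Fin (n + 1) →o Fin 2), (∀ j, f j = 0) →
        h n f = RingHom.id (Polynomial (SimplexRing R n))) ∧
      -- at the vertex `f ≡ 1` it restricts to the endomorphism `X ↦ 0`, i.e. `C ∘ ev`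
      (∀ (n : ℕ) (f : Fin (n + 1) →o Fin 2), (∀ j, f j = 1) →
        ∀ p, h n f p = Polynomial.C (ev n p)) ∧
      -- `ev` is a simplicial retraction of the inclusion `C : R[•] → R[X][•]`:
      (∀ (n : ℕ) (a : SimplexRing R n), ev n (Polynomial.C a) = a) ∧
      (∀ n : ℕ, ev n Polynomial.X = 0) ∧
      (∀ (n n' : ℕ) (g : Fin (n' + 1) →o Fin (n + 1)),
        (ev n').comp (Polynomial.mapRingHom (F n' n g)) = (F n' n g).comp (ev n)) := by
  classical
  set sOf : ∀ n : ℕ, (Fin (n + 1) →o Fin 2) → SimplexRing R n :=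
    fun n f => ∑ j ∈ Finset.univ.filter (fun j => f j = 0), tVar R n j with hsOf
  have hcomm : ∀ (n : ℕ) (f : Fin (n + 1) →o Fin 2) (a : SimplexRing R n),
      Commute (Polynomial.C a) (Polynomial.C (sOf n f) * Polynomial.X) := by
    intro n f a
    have h1 : Commute (sOf n f) a :=
      Commute.sum_left _ _ _ (fun j _ => tVar_commute R n j a)
    exact Commute.mul_right (h1.symm.map Polynomial.C) (Polynomial.commute_X _).symm
  set h : ∀ n : ℕ, (Fin (n + 1) →o Fin 2) →
      (Polynomial (SimplexRing R n) →+* Polynomial (SimplexRing R n)) :=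
    fun n f => Polynomial.eval₂RingHom' Polynomial.C
      (Polynomial.C (sOf n f) * Polynomial.X) (hcomm n f) with hh
  set ev : ∀ n : ℕ, Polynomial (SimplexRing R n) →+* SimplexRing R n :=
    fun n => Polynomial.eval₂RingHom' (RingHom.id _) 0 (fun _ => Commute.zero_right _)
    with hev
  have hC : ∀ (n : ℕ) (f : Fin (n + 1) →o Fin 2) (a : SimplexRing R n),
      h n f (Polynomial.C a) = Polynomial.C a := by
    intro n f a; simp [hh, Polynomial.eval₂_C]
  have hX : ∀ (n : ℕ) (f : Fin (n + 1) →o Fin 2),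
      h n f Polynomial.X = Polynomial.C (sOf n f) * Polynomial.X := by
    intro n f; simp [hh, Polynomial.eval₂_X]
  have hevC : ∀ (n : ℕ) (a : SimplexRing R n), ev n (Polynomial.C a) = a := by
    intro n a; simp [hev, Polynomial.eval₂_C]
  have hevX : ∀ n : ℕ, ev n Polynomial.X = 0 := by
    intro n; simp [hev, Polynomial.eval₂_X]
  have key : ∀ (n n' : ℕ) (g : Fin (n' + 1) →o Fin (n + 1)) (f : Fin (n + 1) →o Fin 2),
      F n' n g (sOf n f) = sOf n' (f.comp g) := by
    intro n n' g f
    rw [hsOf]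
    simp only [map_sum, hFt]
    have inner : ∀ k ∈ Finset.univ.filter (fun k => f k = 0),
        (∑ j ∈ Finset.univ.filter (fun j => g j = k), tVar R n' j)
          = ∑ j ∈ (Finset.univ.filter fun j => f (g j) = 0).filter
              (fun j => g j = k), tVar R n' j := by
      intro k hk
      rw [Finset.mem_filter] at hk
      congr 1
      ext j
      simp only [Finset.mem_filter, Finset.mem_univ, true_and]
      exact ⟨fun hj => ⟨by rw [hj]; exact hk.2, hj⟩, And.right⟩
    rw [Finset.sum_congr rfl inner,
      Finset.sum_fiberwise_of_maps_to (fun j hj => by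
        rw [Finset.mem_filter] at hj ⊢; exact ⟨Finset.mem_univ _, hj.2⟩)]
    rfl
  refine ⟨h, ev, hC, hX, ?_, ?_, ?_, hevC, hevX, ?_⟩
  · intro n n' g f
    apply Polynomial.ringHom_ext
    · intro a
      simp [Polynomial.coe_mapRingHom, hC]
    · simp only [RingHom.comp_apply, Polynomial.coe_mapRingHom, Polynomial.map_X, hX,
        Polynomial.map_mul, Polynomial.map_C, Polynomial.map_X, key]
  · intro n f hf
    apply Polynomial.ringHom_ext
    · intro a; simp [hC]
    · rw [hX]
      have : sOf n f = 1 := by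
        rw [hsOf]
        simp only
        rw [Finset.filter_true_of_mem (fun j _ => hf j)]
        exact sum_tVar_eq_one R n
      simp [this]
  · intro n f hf p
    have : h n f = (Polynomial.C).comp (ev n) := by
      apply Polynomial.ringHom_ext
      · intro a; simp [hC, hevC]
      · rw [RingHom.comp_apply, hevX, hX]
        have : sOf n f = 0 := by
          rw [hsOf]
          simp only
          rw [Finset.filter_false_of_mem (fun j _ => by rw [hf j]; exact one_ne_zero),
            Finset.sum_empty]
        simp [this]
    rw [this]; rfl
  · intro n n' g
    apply Polynomial.ringHom_ext
    · intro a
      simp [Polynomial.coe_mapRingHom, hevC]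
    · simp [Polynomial.coe_mapRingHom, hevX]
end

section
/- Let C be a class of groups closed under isomorphism that satisfies: (FIN) every finite group is in C; (TREE) whenever a group G acts on a tree (a contractible 1-dimensional G-CW-complex) with all isotropy groups in C, then G ∈ C; and (COL) whenever G is the union of a directed system of subgroups each in C, then G ∈ C. Then C is closed under taking subgroups. -/
open scoped Pointwise

/-- The smallest class of groups `C₀` satisfying
(FIN) every finite group is in `C₀`;
(TREE) if `G` acts on a tree (by graph automorphisms) with all vertex and edge
isotropy groups in `C₀`, then `G ∈ C₀`;
(COL) if `G` is the union of a directed system of subgroups each belonging to `C₀`,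
then `G ∈ C₀`;
together with closure under isomorphism of groups. -/
inductive InC0 : ∀ (G : Type), [Group G] → Prop where
  | fin (G : Type) [Group G] (h : Finite G) : InC0 G
  | iso (G H : Type) [Group G] [Group H] (e : G ≃* H) (hG : InC0 G) : InC0 H
  | tree (G : Type) [Group G] (V : Type) (T : SimpleGraph V) (htree : T.IsTree)
      [MulAction G V]
      (hadj : ∀ (g : G) (u v : V), T.Adj u v → T.Adj (g • u) (g • v))
      (hvert : ∀ v : V, InC0 (MulAction.stabilizer G v))
      (hedge : ∀ u v : V, T.Adj u v → InC0 (MulAction.stabilizer G ({u, v} : Set V))) :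
      InC0 G
  | col (G : Type) [Group G] (ι : Type) (H : ι → Subgroup G)
      (hdir : Directed (· ≤ ·) H) (hcov : ∀ g : G, ∃ i, g ∈ H i)
      (hmem : ∀ i, InC0 (H i)) : InC0 G

/-!
Induct over the derivation of `InC0 G`, proving more generally that every group `H` with an
injective homomorphism `f : H →* G` lies in `C₀`; this absorbs the isomorphism clause. A finite
group has only finite such `H`; an action of `G` on a tree pulls back along `f` to an action of
`H` on the same tree whose isotropy groups are the preimages of those of `G`, so they embed into
them; and a directed union of subgroups `Kᵢ` of `G` pulls back to the directed union of the
`f⁻¹(Kᵢ)`, each embedding into `Kᵢ`.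
-/

theorem MonoidHom.subgroupComap_injective {G G' : Type*} [Group G] [Group G'] {f : G →* G'}
    (hf : Function.Injective f) (K : Subgroup G') : Function.Injective (f.subgroupComap K) :=
  fun _ _ h => Subtype.ext (hf (congrArg Subtype.val h))

theorem InC0.of_injective {G : Type} [Group G] (hG : InC0 G) :
    ∀ {H : Type} [Group H] (f : H →* G), Function.Injective f → InC0 H := by
  induction hG with
  | fin G hfin =>
    intro H _ f hf
    exact .fin H (Finite.of_injective f hf)
  | iso G G' e _ ih =>
    intro H _ f hf
    exact ih ((e.symm : G' →* G).comp f) (e.symm.injective.comp hf)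
  | tree G V T htree hadj _ _ ihv ihe =>
    intro H _ f hf
    let _ : MulAction H V := MulAction.compHom V f
    refine .tree H V T htree (fun h u v huv => hadj (f h) u v huv) ?_ ?_
    -- for the pulled-back action, `stabilizer H a` is definitionally `(stabilizer G a).comap f`
    · intro v
      exact ihv v (f.subgroupComap (MulAction.stabilizer G v)) (f.subgroupComap_injective hf _)
    · intro u v huv
      exact ihe u v huv (f.subgroupComap (MulAction.stabilizer G ({u, v} : Set V)))
        (f.subgroupComap_injective hf _)
  | col G ι K hdir hcov _ ih =>
    intro H _ f hf
    refine .col H ι (fun i => (K i).comap f)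
      (hdir.mono_comp (g := Subgroup.comap f) _ fun _ _ => Subgroup.comap_mono)
      (fun h => hcov (f h)) fun i => ih i (f.subgroupComap _) (f.subgroupComap_injective hf _)

/-- The smallest class of groups satisfying (FIN), (TREE) and (COL) (and closed under
isomorphism) is closed under taking subgroups. -/
theorem InC0.subgroup_closed (G : Type) [Group G] (hG : InC0 G) (H : Subgroup G) :
    InC0 ↥H :=
  hG.of_injective H.subtype H.subtype_injective
end
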